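/- arXiv:2512.19303 — 8 statements merged into one kernel-verified Lean document; each statement's English description precedes it below -/
import Mathlib

section
/- Let n ≥ 1 and let g = [[A, b], [cᵀ, d]] be an invertible real (n+1)×(n+1) matrix, where A is an n×n real matrix, b, c ∈ ℝⁿ and d ∈ ℝ. For every x ∈ ℝⁿ with cᵀx + d ≠ 0, the homography h_g is differentiable at x, its Jacobian (total derivative) at x is the linear map given by the matrix h'_g(x) = (cᵀx + d)⁻² ((cᵀx + d)A − (Ax + b)cᵀ), and this matrix is invertible. -/
open Matrix

/-- The homography `h_g(x) = (Ax + b)/(cᵀx + d)` associated to the block matrix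
`g = [[A, b], [cᵀ, d]]`. -/
noncomputable def homog {n : ℕ} (A : Matrix (Fin n) (Fin n) ℝ) (b c : Fin n → ℝ) (d : ℝ)
    (x : Fin n → ℝ) : Fin n → ℝ :=
  (c ⬝ᵥ x + d)⁻¹ • (A.mulVec x + b)

/-- The Jacobian matrix `h'_g(x) = (cᵀx + d)⁻² ((cᵀx + d)A − (Ax + b)cᵀ)`. -/
noncomputable def homogJac {n : ℕ} (A : Matrix (Fin n) (Fin n) ℝ) (b c : Fin n → ℝ) (d : ℝ)
    (x : Fin n → ℝ) : Matrix (Fin n) (Fin n) ℝ :=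
  ((c ⬝ᵥ x + d) ^ 2)⁻¹ • ((c ⬝ᵥ x + d) • A - vecMulVec (A.mulVec x + b) c)

/-- The block matrix `[[A, b], [cᵀ, d]]` of size `(n+1) × (n+1)`. -/
def blockMat {n : ℕ} (A : Matrix (Fin n) (Fin n) ℝ) (b c : Fin n → ℝ) (d : ℝ) :
    Matrix (Fin n ⊕ Unit) (Fin n ⊕ Unit) ℝ :=
  Matrix.fromBlocks A (fun i _ => b i) (fun _ j => c j) (fun _ _ => d)

/-! Write `s = cᵀx + d` and `v = Ax + b`. The derivative is the quotient rule. For invertibility,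
right-multiplying `g` by `[[1, s⁻¹x], [0, s⁻¹]]` (determinant `s⁻¹`) gives `[[A, s⁻¹v], [cᵀ, 1]]`,
whose determinant is that of the Schur complement `A - s⁻¹ v cᵀ`. Since `h'_g(x) = s⁻¹ (A - s⁻¹ v cᵀ)`, this gives
`det h'_g(x) = s⁻⁽ⁿ⁺¹⁾ det g`. -/

section

variable {n : ℕ} (A : Matrix (Fin n) (Fin n) ℝ) (b c : Fin n → ℝ) (d : ℝ) (x : Fin n → ℝ)

lemma homogJac_eq_smul_sub :
    homogJac A b c d x =
      (c ⬝ᵥ x + d)⁻¹ • (A - (c ⬝ᵥ x + d)⁻¹ • vecMulVec (A *ᵥ x + b) c) := by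
  rw [homogJac, smul_sub, smul_sub, smul_smul, smul_smul, ← inv_pow, sq]
  congr 2
  simpa using mul_self_mul_inv (c ⬝ᵥ x + d)⁻¹

lemma homogJac_mulVec (y : Fin n → ℝ) :
    homogJac A b c d x *ᵥ y =
      (c ⬝ᵥ x + d)⁻¹ • (A *ᵥ y - ((c ⬝ᵥ x + d)⁻¹ * c ⬝ᵥ y) • (A *ᵥ x + b)) := by
  rw [homogJac_eq_smul_sub, smul_mulVec, sub_mulVec, smul_mulVec, vecMulVec_mulVec,
    op_smul_eq_smul, smul_smul]

lemma homog_hasFDerivAt (hx : c ⬝ᵥ x + d ≠ 0) :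
    HasFDerivAt (homog A b c d)
      (LinearMap.toContinuousLinearMap (Matrix.toLin' (homogJac A b c d x))) x := by
  have hdot : HasFDerivAt (fun y => c ⬝ᵥ y + d)
      (LinearMap.toContinuousLinearMap (dotProductBilin ℝ ℝ c)) x :=
    (LinearMap.toContinuousLinearMap (dotProductBilin ℝ ℝ c)).hasFDerivAt.add_const d
  have haff : HasFDerivAt (fun y => A *ᵥ y + b)
      (LinearMap.toContinuousLinearMap (Matrix.toLin' A)) x :=
    (LinearMap.toContinuousLinearMap (Matrix.toLin' A)).hasFDerivAt.add_const b
  have hquot : HasFDerivAt (homog A b c d) _ x := ((hasFDerivAt_inv hx).comp x hdot).smul haff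
  refine hquot.congr_fderiv ?_
  ext1 y
  simp only [_root_.add_apply, _root_.smul_apply, ContinuousLinearMap.smulRight_apply,
    ContinuousLinearMap.comp_apply, LinearMap.coe_toContinuousLinearMap', toLin'_apply,
    homogJac_mulVec, Function.comp_apply, ContinuousLinearMap.toSpanSingleton_apply,
    dotProductBilin_apply_apply]
  generalize c ⬝ᵥ x + d = s
  module

lemma blockMat_eq_fromBlocks :
    blockMat A b c d =
      fromBlocks A (replicateCol Unit b) (replicateRow Unit c) (of fun _ _ => d) :=
  rfl

lemma blockMat_mul_fromBlocks_inv_smul (hx : c ⬝ᵥ x + d ≠ 0) :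
    blockMat A b c d * fromBlocks 1 (replicateCol Unit ((c ⬝ᵥ x + d)⁻¹ • x)) 0
        (of fun _ _ => (c ⬝ᵥ x + d)⁻¹) =
      fromBlocks A (replicateCol Unit ((c ⬝ᵥ x + d)⁻¹ • (A *ᵥ x + b))) (replicateRow Unit c) 1 := by
  rw [blockMat_eq_fromBlocks, fromBlocks_multiply]
  congr 1
  · simp
  · ext i j
    simp [mul_apply, mulVec, dotProduct, mul_comm]
  · simp
  · ext
    simpa [mul_apply, mul_comm d, ← mul_add, dotProduct] using inv_mul_cancel₀ hx

lemma det_homogJac (hx : c ⬝ᵥ x + d ≠ 0) :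
    (homogJac A b c d x).det = ((c ⬝ᵥ x + d) ^ (n + 1))⁻¹ * (blockMat A b c d).det := by
  have hschur := congrArg det (blockMat_mul_fromBlocks_inv_smul A b c d x hx)
  rw [det_mul, det_fromBlocks_zero₂₁, det_fromBlocks_one₂₂, replicateCol_smul, smul_mul,
    ← vecMulVec_eq] at hschur
  simp only [det_one, det_unique, of_apply, one_mul] at hschur
  rw [homogJac_eq_smul_sub, det_smul, ← hschur, Fintype.card_fin, pow_succ, mul_inv]
  ring

end

theorem homography_hasFDerivAt_and_jacobian_isUnit_general {n : ℕ}
    (A : Matrix (Fin n) (Fin n) ℝ) (b c : Fin n → ℝ) (d : ℝ)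
    (hg : (blockMat A b c d).det ≠ 0)
    (x : Fin n → ℝ) (hx : c ⬝ᵥ x + d ≠ 0) :
    HasFDerivAt (homog A b c d)
      (LinearMap.toContinuousLinearMap (Matrix.toLin' (homogJac A b c d x))) x ∧
    IsUnit (homogJac A b c d x) := by
  refine ⟨homog_hasFDerivAt A b c d x hx, ?_⟩
  rw [isUnit_iff_isUnit_det, det_homogJac A b c d x hx, isUnit_iff_ne_zero]
  exact mul_ne_zero (inv_ne_zero (pow_ne_zero _ hx)) hg

/-- **Proposition 3.1.** If `g = [[A, b], [cᵀ, d]]` is invertible and `cᵀx + d ≠ 0`, then the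
homography `h_g` is differentiable at `x`, its total derivative at `x` is given by the matrix
`h'_g(x) = (cᵀx + d)⁻² ((cᵀx + d)A − (Ax + b)cᵀ)`, and this matrix is invertible. -/
theorem homography_hasFDerivAt_and_jacobian_isUnit {n : ℕ} (hn : 1 ≤ n)
    (A : Matrix (Fin n) (Fin n) ℝ) (b c : Fin n → ℝ) (d : ℝ)
    (hg : (blockMat A b c d).det ≠ 0)
    (x : Fin n → ℝ) (hx : c ⬝ᵥ x + d ≠ 0) :
    HasFDerivAt (homog A b c d)
      (LinearMap.toContinuousLinearMap (Matrix.toLin' (homogJac A b c d x))) x ∧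
    IsUnit (homogJac A b c d x) :=
  homography_hasFDerivAt_and_jacobian_isUnit_general A b c d hg x hx
end

section
/- (Proposition 3.4, part 1.) Let n ≥ 1, let M ⊆ ℝⁿ be open, let V : M → Sym(n, ℝ) be a continuously differentiable map into the invertible real symmetric n×n matrices, and suppose there exists a twice continuously differentiable map ψ : M → ℝⁿ whose Jacobian matrix satisfies Dψ(m) = V(m)⁻¹ for all m ∈ M. Then for every m ∈ M and all Δ, Δ₁ ∈ ℝⁿ: (D_{V(m)Δ}V)(m)·Δ₁ = (D_{V(m)Δ₁}V)(m)·Δ, where D_u V(m) denotes the directional derivative of V at m in the direction u ∈ ℝⁿ (a symmetric n×n matrix). -/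
open Matrix

attribute [local instance] Matrix.normedAddCommGroup Matrix.normedSpace

noncomputable def matCLM {n : ℕ} (M : Matrix (Fin n) (Fin n) ℝ) :
    (Fin n → ℝ) →L[ℝ] (Fin n → ℝ) :=
  LinearMap.toContinuousLinearMap (Matrix.toLin' M)

/-!
Differentiating `V(y) ∘ Dψ(y) = id` at `m` gives `DV(u) ∘ Dψ(m) = -V(m) ∘ D²ψ(m)(u)`. Applied to
`Dψ(m)⁻¹ Δ₁ = V(m) Δ₁` in the direction `u = V(m) Δ`, this reads
`DV(V(m) Δ) Δ₁ = -V(m) (D²ψ(m)(V(m) Δ, V(m) Δ₁))`, which is symmetric in `Δ, Δ₁` because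
second derivatives are symmetric.
-/

open Filter Topology ContinuousLinearMap

section InverseJacobian

variable {𝕜 E F G : Type*} [NontriviallyNormedField 𝕜]
  [NormedAddCommGroup E] [NormedSpace 𝕜 E] [NormedAddCommGroup F] [NormedSpace 𝕜 F]
  [NormedAddCommGroup G] [NormedSpace 𝕜 G]

theorem fderiv_comp_add_comp_fderiv_eq_zero {c : E → F →L[𝕜] G} {d : E → E →L[𝕜] F} {x : E}
    {k : E →L[𝕜] G} (hc : DifferentiableAt 𝕜 c x) (hd : DifferentiableAt 𝕜 d x)
    (hcd : (fun y => (c y).comp (d y)) =ᶠ[𝓝 x] fun _ => k) (u : E) :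
    (fderiv 𝕜 c x u).comp (d x) + (c x).comp (fderiv 𝕜 d x u) = 0 := by
  have h := (fderiv_clm_comp hc hd).symm.trans (hcd.fderiv_eq.trans (fderiv_const_apply k))
  simpa [add_comm] using congrArg (fun L : E →L[𝕜] E →L[𝕜] G => L u) h

theorem fderiv_apply_comm_of_comp_fderiv_eq_id {ψ : E → F} {A : E → F →L[𝕜] E} {x : E}
    (hψ : IsSymmSndFDerivAt 𝕜 ψ x) (hDψ : DifferentiableAt 𝕜 (fderiv 𝕜 ψ) x)
    (hA : DifferentiableAt 𝕜 A x)
    (hleft : (fun y => (A y).comp (fderiv 𝕜 ψ y)) =ᶠ[𝓝 x] fun _ => .id 𝕜 E)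
    (hright : (fderiv 𝕜 ψ x).comp (A x) = .id 𝕜 F) (v w : F) :
    fderiv 𝕜 A x (A x v) w = fderiv 𝕜 A x (A x w) v := by
  have hDA : ∀ u w, fderiv 𝕜 A x u w = -A x (fderiv 𝕜 (fderiv 𝕜 ψ) x u (A x w)) := by
    intro u w
    have h := congrArg (fun L : E →L[𝕜] E => L (A x w))
      (fderiv_comp_add_comp_fderiv_eq_zero hA hDψ hleft u)
    have hw : fderiv 𝕜 ψ x (A x w) = w := congrArg (fun L : F →L[𝕜] F => L w) hright
    simp only [_root_.add_apply, ContinuousLinearMap.comp_apply, hw,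
      _root_.zero_apply] at h
    exact eq_neg_of_add_eq_zero_left h
  rw [hDA, hDA, hψ.eq]

end InverseJacobian

section MatrixCLM

variable {n : ℕ}

noncomputable def matCLMEquiv (n : ℕ) :
    Matrix (Fin n) (Fin n) ℝ ≃L[ℝ] ((Fin n → ℝ) →L[ℝ] (Fin n → ℝ)) :=
  (Matrix.toLin'.trans LinearMap.toContinuousLinearMap).toContinuousLinearEquiv

@[simp]
theorem matCLMEquiv_apply (A : Matrix (Fin n) (Fin n) ℝ) : matCLMEquiv n A = matCLM A := rfl

@[simp]
theorem matCLM_apply (A : Matrix (Fin n) (Fin n) ℝ) (v : Fin n → ℝ) : matCLM A v = A *ᵥ v :=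
  Matrix.toLin'_apply A v

theorem matCLM_comp_matCLM (A B : Matrix (Fin n) (Fin n) ℝ) :
    (matCLM A).comp (matCLM B) = matCLM (A * B) := by
  ext v : 1
  simp [mulVec_mulVec]

theorem matCLM_one : matCLM (1 : Matrix (Fin n) (Fin n) ℝ) = .id ℝ _ := by
  ext v : 1
  simp

theorem matCLM_comp_matCLM_inv {A : Matrix (Fin n) (Fin n) ℝ} (hA : IsUnit A) :
    (matCLM A).comp (matCLM A⁻¹) = .id ℝ _ := by
  rw [matCLM_comp_matCLM, mul_nonsing_inv A ((isUnit_iff_isUnit_det A).mp hA), matCLM_one]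

theorem matCLM_inv_comp_matCLM {A : Matrix (Fin n) (Fin n) ℝ} (hA : IsUnit A) :
    (matCLM A⁻¹).comp (matCLM A) = .id ℝ _ := by
  rw [matCLM_comp_matCLM, nonsing_inv_mul A ((isUnit_iff_isUnit_det A).mp hA), matCLM_one]

end MatrixCLM

theorem variance_function_symmetry_general {n : ℕ}
    (M : Set (Fin n → ℝ)) (hM : IsOpen M)
    (V : (Fin n → ℝ) → Matrix (Fin n) (Fin n) ℝ)
    (hV : ContDiffOn ℝ 1 V M)
    (hVinv : ∀ m ∈ M, IsUnit (V m))
    (ψ : (Fin n → ℝ) → (Fin n → ℝ))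
    (hψ : ContDiffOn ℝ 2 ψ M)
    (hψ' : ∀ m ∈ M, HasFDerivAt ψ (matCLM ((V m)⁻¹)) m) :
    ∀ m ∈ M, ∀ Δ Δ₁ : Fin n → ℝ,
      (fderiv ℝ V m ((V m).mulVec Δ)).mulVec Δ₁
        = (fderiv ℝ V m ((V m).mulVec Δ₁)).mulVec Δ := by
  intro m hm Δ Δ₁
  have hMm : M ∈ 𝓝 m := hM.mem_nhds hm
  have hψm : ContDiffAt ℝ 2 ψ m := hψ.contDiffAt hMm
  have hfderivV : ∀ u, fderiv ℝ (matCLMEquiv n ∘ V) m u = matCLM (fderiv ℝ V m u) :=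
    fun u => congrArg (fun L => L u) (matCLMEquiv n).comp_fderiv
  have h := fderiv_apply_comm_of_comp_fderiv_eq_id (A := matCLMEquiv n ∘ V)
    (hψm.isSymmSndFDerivAt (by simp))
    ((hψm.fderiv_right (m := 1) le_rfl).differentiableAt one_ne_zero)
    ((matCLMEquiv n).comp_differentiableAt_iff.mpr
      ((hV.contDiffAt hMm).differentiableAt one_ne_zero))
    (eventually_of_mem hMm fun y hy => by
      simp [(hψ' y hy).fderiv, matCLM_comp_matCLM_inv (hVinv y hy)])
    (by simp [(hψ' m hm).fderiv, matCLM_inv_comp_matCLM (hVinv m hm)]) Δ Δ₁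
  simpa [hfderivV] using h

/-- **Proposition 3.4, part 1.** If `V : M → Sym(n, ℝ)` is a `C¹` map into invertible symmetric
matrices and there is a `C²` map `ψ` with Jacobian `Dψ(m) = V(m)⁻¹`, then the directional
derivatives of `V` satisfy the symmetry `(D_{V(m)Δ}V)(m)·Δ₁ = (D_{V(m)Δ₁}V)(m)·Δ`. -/
theorem variance_function_symmetry {n : ℕ} (hn : 1 ≤ n)
    (M : Set (Fin n → ℝ)) (hM : IsOpen M)
    (V : (Fin n → ℝ) → Matrix (Fin n) (Fin n) ℝ)
    (hV : ContDiffOn ℝ 1 V M)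
    (hVinv : ∀ m ∈ M, IsUnit (V m))
    (hVsymm : ∀ m ∈ M, (V m).IsSymm)
    (ψ : (Fin n → ℝ) → (Fin n → ℝ))
    (hψ : ContDiffOn ℝ 2 ψ M)
    (hψ' : ∀ m ∈ M, HasFDerivAt ψ (matCLM ((V m)⁻¹)) m) :
    ∀ m ∈ M, ∀ Δ Δ₁ : Fin n → ℝ,
      (fderiv ℝ V m ((V m).mulVec Δ)).mulVec Δ₁
        = (fderiv ℝ V m ((V m).mulVec Δ₁)).mulVec Δ :=
  variance_function_symmetry_general M hM V hV hVinv ψ hψ hψ'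
end

section
/- (Proposition 5.1, part 2.) Let n ≥ 1. Define the following subsets of GL(n+1, ℝ), with elements written in block form [[A, b], [cᵀ, d]]: G₀ = { [[A, b], [0, d]] invertible : d > 0 }; H₊ = { [[Iₙ, 0], [cᵀ, 1]] : c ∈ ℝⁿ, c ≠ 0 }; H₋ = { [[Iₙ, 0], [cᵀ, −1]] : c ∈ ℝⁿ, c ≠ 0 }; H₀ = { [[Iₙ + bcᵀ, b], [cᵀ, 1]] : b, c ∈ ℝⁿ with cᵀb + 1 = 0 }; and G̃ = { [[A, b], [cᵀ, d]] ∈ GL(n+1, ℝ) : c ≠ 0 or d > 0 }. Then G̃ = G₀ ∪ (H₊·G₀) ∪ (H₀·G₀) ∪ (H₋·G₀), where X·G₀ denotes the set of products x·g₀ with x ∈ X and g₀ ∈ G₀. -/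
open Matrix Pointwise

/-- The subgroup `G₀` of invertible matrices `[[A, b], [0, d]]` with `d > 0`. -/
def Gzero (n : ℕ) : Set (Matrix (Fin n ⊕ Unit) (Fin n ⊕ Unit) ℝ) :=
  {g | ∃ (A : Matrix (Fin n) (Fin n) ℝ) (b : Fin n → ℝ) (d : ℝ),
    0 < d ∧ g = blockMat A b 0 d ∧ g.det ≠ 0}

/-- The set `H₊` of matrices `[[Iₙ, 0], [cᵀ, 1]]` with `c ≠ 0`. -/
def Hplus (n : ℕ) : Set (Matrix (Fin n ⊕ Unit) (Fin n ⊕ Unit) ℝ) :=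
  {g | ∃ c : Fin n → ℝ, c ≠ 0 ∧ g = blockMat 1 0 c 1}

/-- The set `H₋` of matrices `[[Iₙ, 0], [cᵀ, −1]]` with `c ≠ 0`. -/
def Hminus (n : ℕ) : Set (Matrix (Fin n ⊕ Unit) (Fin n ⊕ Unit) ℝ) :=
  {g | ∃ c : Fin n → ℝ, c ≠ 0 ∧ g = blockMat 1 0 c (-1)}

/-- The set `H₀` of matrices `[[Iₙ + bcᵀ, b], [cᵀ, 1]]` with `cᵀb + 1 = 0`. -/
def Hnought (n : ℕ) : Set (Matrix (Fin n ⊕ Unit) (Fin n ⊕ Unit) ℝ) :=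
  {g | ∃ b c : Fin n → ℝ, c ⬝ᵥ b + 1 = 0 ∧ g = blockMat (1 + vecMulVec b c) b c 1}

/-- The set `G̃` of invertible matrices `[[A, b], [cᵀ, d]]` with `c ≠ 0` or `d > 0`. -/
def Gtilde (n : ℕ) : Set (Matrix (Fin n ⊕ Unit) (Fin n ⊕ Unit) ℝ) :=
  {g | g.det ≠ 0 ∧
    ((fun j => g (Sum.inr ()) (Sum.inl j)) ≠ 0 ∨ 0 < g (Sum.inr ()) (Sum.inr ()))}

/-!
Write `g = [[A, b], [cᵀ, d]]`. If `c = 0` then `g ∈ G₀`. If `A` is invertible, the Schur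
complement `e = d - cᵀA⁻¹b` is nonzero because `det g = det A · e`, and
`g = [[Iₙ, 0], [cᵀA⁻¹, s]] · [[A, b], [0, s e]]` with `s = ±1` the sign of `e`, so `g ∈ H₊G₀`
or `g ∈ H₋G₀`. If `A` is singular, a left null vector `v` of `A` has `v ⬝ b ≠ 0` since `g` is
invertible; choosing the sign of `v` with `v ⬝ b < 0` and rescaling `b` to `b'` with `v ⬝ b' = -1`
factors `g` through the element of `H₀` built from `b'` and `v`. Conversely `G̃` contains
`G₀`, `H₊`, `H₋`, `H₀` and is stable under right multiplication by `G₀`: that multiplies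
the bottom row `cᵀ` by an invertible `A₀`, and when `c = 0` multiplies the corner by `d₀ > 0`.
-/

section BlockMatrix

variable {n : ℕ}

lemma exists_eq_blockMat (g : Matrix (Fin n ⊕ Unit) (Fin n ⊕ Unit) ℝ) :
    ∃ A b c d, g = blockMat A b c d :=
  ⟨g.toBlocks₁₁, fun i => g (.inl i) (.inr ()), fun j => g (.inr ()) (.inl j),
    g (.inr ()) (.inr ()), by ext (i | ⟨⟩) (j | ⟨⟩) <;> rfl⟩

lemma blockMat_mul (A₁ A₂ : Matrix (Fin n) (Fin n) ℝ) (b₁ c₁ b₂ c₂ : Fin n → ℝ) (d₁ d₂ : ℝ) :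
    blockMat A₁ b₁ c₁ d₁ * blockMat A₂ b₂ c₂ d₂ =
      blockMat (A₁ * A₂ + vecMulVec b₁ c₂) (A₁ *ᵥ b₂ + d₂ • b₁) (c₁ ᵥ* A₂ + d₁ • c₂)
        (c₁ ⬝ᵥ b₂ + d₁ * d₂) := by
  ext (i | ⟨⟩) (j | ⟨⟩) <;>
    simp [blockMat, fromBlocks, mul_apply, Fintype.sum_sum_type, vecMulVec_apply, mulVec,
      vecMul, dotProduct, mul_comm]

lemma det_blockMat_zero₂₁ (A : Matrix (Fin n) (Fin n) ℝ) (b : Fin n → ℝ) (d : ℝ) :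
    (blockMat A b 0 d).det = A.det * d :=
  (det_fromBlocks_zero₂₁ A _ (fun _ _ => d)).trans (congrArg (A.det * ·) (det_unique _))

lemma det_blockMat_zero₁₂ (A : Matrix (Fin n) (Fin n) ℝ) (c : Fin n → ℝ) (d : ℝ) :
    (blockMat A 0 c d).det = A.det * d :=
  (det_fromBlocks_zero₁₂ A _ (fun _ _ => d)).trans (congrArg (A.det * ·) (det_unique _))

lemma blockMat_mem_Gtilde_iff {A : Matrix (Fin n) (Fin n) ℝ} {b c : Fin n → ℝ} {d : ℝ} :
    blockMat A b c d ∈ Gtilde n ↔ (blockMat A b c d).det ≠ 0 ∧ (c ≠ 0 ∨ 0 < d) :=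
  Iff.rfl

lemma blockMat_one_add_vecMulVec_eq_mul (b c : Fin n → ℝ) :
    blockMat (1 + vecMulVec b c) b c 1 = blockMat 1 b 0 1 * blockMat 1 0 c 1 := by
  rw [blockMat_mul]; simp

lemma blockMat_one_zero_mul (c : Fin n → ℝ) (s : ℝ) (A : Matrix (Fin n) (Fin n) ℝ)
    (b : Fin n → ℝ) (e : ℝ) :
    blockMat 1 0 c s * blockMat A b 0 e = blockMat A b (c ᵥ* A) (c ⬝ᵥ b + s * e) := by
  rw [blockMat_mul]; simp

lemma blockMat_eq_Hnought_mul {A : Matrix (Fin n) (Fin n) ℝ} {b c v b' : Fin n → ℝ} {d : ℝ}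
    (hvA : v ᵥ* A = 0) (hvb' : v ⬝ᵥ b' = -1) :
    blockMat A b c d = blockMat (1 + vecMulVec b' v) b' v 1 *
      blockMat (A - vecMulVec b' c) (b - d • b') 0 (-(v ⬝ᵥ b)) := by
  rw [blockMat_mul]
  congr 1
  · simp [add_mul, vecMulVec_mul, vecMul_sub, vecMul_vecMulVec, hvA, hvb']
  · rw [add_mulVec, one_mulVec, vecMulVec_mulVec, op_smul_eq_smul, dotProduct_sub,
      dotProduct_smul, hvb', smul_eq_mul]
    module
  · simp [vecMul_sub, vecMul_vecMulVec, hvA, hvb']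
  · simp [dotProduct_sub, hvb']

end BlockMatrix

section Decomposition

variable {n : ℕ}

lemma Gzero_subset_Gtilde : Gzero n ⊆ Gtilde n := by
  rintro _ ⟨A, b, d, hd, rfl, hdet⟩
  exact ⟨hdet, Or.inr hd⟩

lemma Hplus_subset_Gtilde : Hplus n ⊆ Gtilde n := by
  rintro _ ⟨c, hc, rfl⟩
  exact blockMat_mem_Gtilde_iff.mpr ⟨by simp [det_blockMat_zero₁₂], Or.inl hc⟩

lemma Hminus_subset_Gtilde : Hminus n ⊆ Gtilde n := by
  rintro _ ⟨c, hc, rfl⟩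
  exact blockMat_mem_Gtilde_iff.mpr ⟨by simp [det_blockMat_zero₁₂], Or.inl hc⟩

lemma Hnought_subset_Gtilde : Hnought n ⊆ Gtilde n := by
  rintro _ ⟨b, c, hcb, rfl⟩
  refine blockMat_mem_Gtilde_iff.mpr
    ⟨by simp [blockMat_one_add_vecMulVec_eq_mul, det_blockMat_zero₁₂, det_blockMat_zero₂₁],
    Or.inl ?_⟩
  rintro rfl
  simp at hcb

lemma Gtilde_mul_Gzero_subset : Gtilde n * Gzero n ⊆ Gtilde n := by
  refine Set.mul_subset_iff.mpr ?_
  rintro g hg _ ⟨A, b, d, hd, rfl, hdet⟩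
  obtain ⟨A', b', c', d', rfl⟩ := exists_eq_blockMat g
  obtain ⟨hg_det, hc'd'⟩ := blockMat_mem_Gtilde_iff.mp hg
  have hA : A.det ≠ 0 := left_ne_zero_of_mul (det_blockMat_zero₂₁ A b d ▸ hdet)
  have hprod := det_mul (blockMat A' b' c' d') _ ▸ mul_ne_zero hg_det hdet
  rw [blockMat_mul] at hprod ⊢
  refine blockMat_mem_Gtilde_iff.mpr ⟨hprod, ?_⟩
  by_cases hc' : c' = 0
  · subst hc'
    have hd' : 0 < d' := hc'd'.resolve_left (not_not.mpr rfl)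
    right
    simpa using mul_pos hd' hd
  · left
    simpa using fun h => hA (exists_vecMul_eq_zero_iff.mp ⟨c', hc', h⟩)

lemma mul_blockMat_mem_mul_Gzero {H : Set (Matrix (Fin n ⊕ Unit) (Fin n ⊕ Unit) ℝ)}
    {h : Matrix (Fin n ⊕ Unit) (Fin n ⊕ Unit) ℝ} (hh : h ∈ H) {A : Matrix (Fin n) (Fin n) ℝ}
    {b : Fin n → ℝ} {e : ℝ} (he : 0 < e) (hdet : (h * blockMat A b 0 e).det ≠ 0) :
    h * blockMat A b 0 e ∈ H * Gzero n :=
  Set.mul_mem_mul hh ⟨A, b, e, he, rfl, right_ne_zero_of_mul (det_mul h _ ▸ hdet)⟩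

lemma exists_vecMul_eq_zero_dotProduct_neg {A : Matrix (Fin n) (Fin n) ℝ} {b c : Fin n → ℝ}
    {d : ℝ} (hg : (blockMat A b c d).det ≠ 0) (hA : A.det = 0) :
    ∃ v, v ᵥ* A = 0 ∧ v ⬝ᵥ b < 0 := by
  obtain ⟨v, hv, hvA⟩ := exists_vecMul_eq_zero_iff.mpr hA
  have hvb : v ⬝ᵥ b ≠ 0 := by
    intro hvb
    refine hg (exists_vecMul_eq_zero_iff.mp ⟨Sum.elim v 0, ?_, ?_⟩)
    · exact fun h => hv (funext fun i => congrFun h (.inl i))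
    · ext (j | ⟨⟩)
      · simpa [blockMat, fromBlocks, vecMul, dotProduct, Fintype.sum_sum_type] using
          congrFun hvA j
      · simpa [blockMat, fromBlocks, vecMul, dotProduct, Fintype.sum_sum_type] using hvb
  rcases hvb.lt_or_gt with h | h
  · exact ⟨v, hvA, h⟩
  · exact ⟨-v, by rw [neg_vecMul, hvA, neg_zero], by simpa using h⟩

lemma mem_Hnought_mul_Gzero_of_det_eq_zero {A : Matrix (Fin n) (Fin n) ℝ} {b c : Fin n → ℝ}
    {d : ℝ} (hg : (blockMat A b c d).det ≠ 0) (hA : A.det = 0) :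
    blockMat A b c d ∈ Hnought n * Gzero n := by
  obtain ⟨v, hvA, hvb⟩ := exists_vecMul_eq_zero_dotProduct_neg hg hA
  set b' := (-(v ⬝ᵥ b)⁻¹) • b
  have hvb' : v ⬝ᵥ b' = -1 := by simp [b', dotProduct_smul, hvb.ne]
  rw [blockMat_eq_Hnought_mul hvA hvb'] at hg ⊢
  refine mul_blockMat_mem_mul_Gzero ?_ (by linarith) hg
  exact ⟨b', v, by linarith, rfl⟩

lemma mem_Hplus_mul_Gzero_or_mem_Hminus_mul_Gzero {A : Matrix (Fin n) (Fin n) ℝ}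
    {b c : Fin n → ℝ} {d : ℝ} (hg : (blockMat A b c d).det ≠ 0) (hA : A.det ≠ 0) (hc : c ≠ 0) :
    blockMat A b c d ∈ Hplus n * Gzero n ∨ blockMat A b c d ∈ Hminus n * Gzero n := by
  set c' := c ᵥ* A⁻¹
  have hc'A : c' ᵥ* A = c := by
    rw [vecMul_vecMul, nonsing_inv_mul A (isUnit_iff_ne_zero.mpr hA), vecMul_one]
  have hc' : c' ≠ 0 := by
    intro h
    rw [h, zero_vecMul] at hc'A
    exact hc hc'A.symm
  set e := d - c' ⬝ᵥ b
  have factor (s : ℝ) (hs : s * s = 1) :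
      blockMat A b c d = blockMat 1 0 c' s * blockMat A b 0 (s * e) := by
    rw [blockMat_one_zero_mul, hc'A, ← mul_assoc, hs, one_mul]
    congr 1
    ring
  rcases lt_trichotomy e 0 with he | he | he
  · rw [factor (-1) (by norm_num)] at hg ⊢
    exact Or.inr (mul_blockMat_mem_mul_Gzero (H := Hminus n) ⟨c', hc', rfl⟩ (by linarith) hg)
  · rw [factor 1 (by norm_num), det_mul, det_blockMat_zero₂₁, he] at hg
    simp at hg
  · rw [factor 1 (by norm_num)] at hg ⊢
    exact Or.inl (mul_blockMat_mem_mul_Gzero (H := Hplus n) ⟨c', hc', rfl⟩ (by linarith) hg)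

end Decomposition

theorem Gtilde_decomposition_general {n : ℕ} :
    Gtilde n =
      Gzero n ∪ (Hplus n * Gzero n) ∪ (Hnought n * Gzero n) ∪ (Hminus n * Gzero n) := by
  refine subset_antisymm ?_ ?_
  · intro g hg
    obtain ⟨A, b, c, d, rfl⟩ := exists_eq_blockMat g
    obtain ⟨hdet, hcd⟩ := blockMat_mem_Gtilde_iff.mp hg
    by_cases hc : c = 0
    · subst hc
      exact Or.inl (Or.inl (Or.inl ⟨A, b, d, hcd.resolve_left (not_not.mpr rfl), rfl, hdet⟩))
    by_cases hA : A.det = 0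
    · exact Or.inl (Or.inr (mem_Hnought_mul_Gzero_of_det_eq_zero hdet hA))
    rcases mem_Hplus_mul_Gzero_or_mem_Hminus_mul_Gzero hdet hA hc with h | h
    · exact Or.inl (Or.inl (Or.inr h))
    · exact Or.inr h
  · refine Set.union_subset (Set.union_subset (Set.union_subset Gzero_subset_Gtilde ?_) ?_) ?_
    · exact (Set.mul_subset_mul_right Hplus_subset_Gtilde).trans Gtilde_mul_Gzero_subset
    · exact (Set.mul_subset_mul_right Hnought_subset_Gtilde).trans Gtilde_mul_Gzero_subset
    · exact (Set.mul_subset_mul_right Hminus_subset_Gtilde).trans Gtilde_mul_Gzero_subset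

/-- **Proposition 5.1, part 2.** `G̃ = G₀ ∪ H₊G₀ ∪ H₀G₀ ∪ H₋G₀`. -/
theorem Gtilde_decomposition {n : ℕ} (hn : 1 ≤ n) :
    Gtilde n =
      Gzero n ∪ (Hplus n * Gzero n) ∪ (Hnought n * Gzero n) ∪ (Hminus n * Gzero n) :=
  Gtilde_decomposition_general
end

section
/- (Theorem 5.2.) Let n ≥ 1, let a ∈ ℝ, let B₁, …, Bₙ and C be real symmetric n×n matrices, and define V : ℝⁿ → Sym(n, ℝ) by V(m) = a·mmᵀ + m₁B₁ + ⋯ + mₙBₙ + C. Let g = [[A, b], [cᵀ, d]] be an invertible real (n+1)×(n+1) matrix. Then there exists a symmetric n×n matrix P(m) whose entries are real polynomials in the variables m₁, …, mₙ of total degree at most 3 such that T_g(V)(m) = P(m) for every m ∈ ℝⁿ with cᵀm + d > 0. -/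
/-!
Write `g⁻¹ = [[A', b'], [c'ᵀ, d']]`, `λ = cᵀm + d` and `u = Am + b`, so that `g (m, 1) = (u, λ)`.
The relation `g⁻¹ g = 1` shows that `N = A' - m c'ᵀ` satisfies `N (λA - u cᵀ) = λ` and
`N u = λ (d'm - b')`; hence `(h'_g(m))⁻¹ = λ N` and `N h_g(m) = d'm - b'`. Therefore
`T_g(V)(m) = λ N V(u / λ) Nᵀ = aλ (d'm - b')(d'm - b')ᵀ + ∑ₖ uₖ N Bₖ Nᵀ + λ N C Nᵀ`,
in which `λ`, `u`, `d'm - b'` and `N` are affine in `m`: every entry is a cubic polynomial.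
-/

open Matrix

/-- The transformation `T_g(V)(m) = (cᵀm + d)⁻¹ (h'_g(m))⁻¹ V(h_g(m)) ((h'_g(m))ᵀ)⁻¹`. -/
noncomputable def Tg {n : ℕ} (A : Matrix (Fin n) (Fin n) ℝ) (b c : Fin n → ℝ) (d : ℝ)
    (V : (Fin n → ℝ) → Matrix (Fin n) (Fin n) ℝ) (m : Fin n → ℝ) :
    Matrix (Fin n) (Fin n) ℝ :=
  (c ⬝ᵥ m + d)⁻¹ •
    ((homogJac A b c d m)⁻¹ * V (homog A b c d m) * ((homogJac A b c d m)ᵀ)⁻¹)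


section BlockMatrix

variable {n : ℕ}

lemma blockMat_mul_blockMat (A A' : Matrix (Fin n) (Fin n) ℝ) (b b' c c' : Fin n → ℝ)
    (d d' : ℝ) :
    blockMat A' b' c' d' * blockMat A b c d =
      blockMat (A' * A + vecMulVec b' c) (A' *ᵥ b + d • b') (c' ᵥ* A + d' • c)
        (c' ⬝ᵥ b + d' * d) := by
  ext (i | i) (j | j) <;>
    simp [blockMat, fromBlocks, Matrix.mul_apply, vecMulVec_apply, mulVec, vecMul, dotProduct,
      mul_comm]

lemma blockMat_one : blockMat (1 : Matrix (Fin n) (Fin n) ℝ) 0 0 1 = 1 := by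
  ext (i | i) (j | j) <;> simp [blockMat, Matrix.one_apply, fromBlocks]

lemma blockMat_inj {A A' : Matrix (Fin n) (Fin n) ℝ} {b b' c c' : Fin n → ℝ}
    {d d' : ℝ} :
    blockMat A b c d = blockMat A' b' c' d' ↔ A = A' ∧ b = b' ∧ c = c' ∧ d = d' := by
  refine ⟨fun h => ?_, by rintro ⟨rfl, rfl, rfl, rfl⟩; rfl⟩
  obtain ⟨hA, hb, hc, hd⟩ := Matrix.fromBlocks_inj.mp h
  exact ⟨hA, funext fun i => congrFun (congrFun hb i) (),
    funext fun j => congrFun (congrFun hc ()) j, congrFun (congrFun hd ()) ()⟩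

lemma exists_blockMat_eq (M : Matrix (Fin n ⊕ Unit) (Fin n ⊕ Unit) ℝ) :
    ∃ A b c d, blockMat A b c d = M :=
  ⟨M.toBlocks₁₁, fun i => M (.inl i) (.inr ()), fun j => M (.inr ()) (.inl j),
    M (.inr ()) (.inr ()), by ext (i | i) (j | j) <;> rfl⟩

lemma exists_blockMat_left_inverse {A : Matrix (Fin n) (Fin n) ℝ} {b c : Fin n → ℝ}
    {d : ℝ} (hg : (blockMat A b c d).det ≠ 0) :
    ∃ (A' : Matrix (Fin n) (Fin n) ℝ) (b' c' : Fin n → ℝ) (d' : ℝ),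
      A' * A + vecMulVec b' c = 1 ∧ A' *ᵥ b + d • b' = 0 ∧ c' ᵥ* A + d' • c = 0 ∧
        c' ⬝ᵥ b + d' * d = 1 := by
  obtain ⟨A', b', c', d', hinv⟩ := exists_blockMat_eq (blockMat A b c d)⁻¹
  have hinv_mul := Matrix.nonsing_inv_mul _ (isUnit_iff_ne_zero.mpr hg)
  rw [← hinv, blockMat_mul_blockMat, ← blockMat_one, blockMat_inj] at hinv_mul
  exact ⟨A', b', c', d', hinv_mul⟩

end BlockMatrix

section InverseHomography

variable {ι R : Type*} [Fintype ι] [CommRing R] {A A' : Matrix ι ι R}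
  {b b' c c' : ι → R} {d d' : R}

lemma mulVec_affine_add_smul [DecidableEq ι] (h₁ : A' * A + vecMulVec b' c = 1)
    (h₂ : A' *ᵥ b + d • b' = 0) (x : ι → R) :
    A' *ᵥ (A *ᵥ x + b) + (c ⬝ᵥ x + d) • b' = x := by
  have hx := congrArg (· *ᵥ x) h₁
  simp only [add_mulVec, one_mulVec, vecMulVec_mulVec, op_smul_eq_smul, ← mulVec_mulVec] at hx
  rw [mulVec_add, add_smul, add_add_add_comm, h₂, add_zero, hx]

lemma dotProduct_affine_add_mul (h₃ : c' ᵥ* A + d' • c = 0) (h₄ : c' ⬝ᵥ b + d' * d = 1)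
    (x : ι → R) : c' ⬝ᵥ (A *ᵥ x + b) + (c ⬝ᵥ x + d) * d' = 1 := by
  have hx := congrArg (· ⬝ᵥ x) h₃
  simp only [add_dotProduct, smul_dotProduct, zero_dotProduct, smul_eq_mul] at hx
  rw [dotProduct_add, dotProduct_mulVec, ← h₄]
  linear_combination hx

lemma sub_vecMulVec_mulVec_affine [DecidableEq ι] (h₁ : A' * A + vecMulVec b' c = 1)
    (h₂ : A' *ᵥ b + d • b' = 0) (h₃ : c' ᵥ* A + d' • c = 0) (h₄ : c' ⬝ᵥ b + d' * d = 1)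
    (x : ι → R) :
    (A' - vecMulVec x c') *ᵥ (A *ᵥ x + b) = (c ⬝ᵥ x + d) • (d' • x - b') := by
  have hA := mulVec_affine_add_smul h₁ h₂ x
  have hc := dotProduct_affine_add_mul h₃ h₄ x
  rw [sub_mulVec, vecMulVec_mulVec, op_smul_eq_smul, eq_sub_of_add_eq hA, eq_sub_of_add_eq hc]
  ext i
  simp only [Pi.sub_apply, Pi.smul_apply, smul_eq_mul]
  ring

lemma sub_vecMulVec_mul_affine [DecidableEq ι] (h₁ : A' * A + vecMulVec b' c = 1)
    (h₂ : A' *ᵥ b + d • b' = 0) (h₃ : c' ᵥ* A + d' • c = 0) (h₄ : c' ⬝ᵥ b + d' * d = 1)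
    (x : ι → R) :
    (A' - vecMulVec x c') * ((c ⬝ᵥ x + d) • A - vecMulVec (A *ᵥ x + b) c) =
      (c ⬝ᵥ x + d) • 1 := by
  rw [Matrix.mul_sub, Matrix.mul_smul, mul_vecMulVec, sub_vecMulVec_mulVec_affine h₁ h₂ h₃ h₄,
    Matrix.sub_mul, vecMulVec_mul, eq_sub_of_add_eq h₁, eq_neg_of_add_eq_zero_left h₃]
  ext i j
  simp only [Matrix.sub_apply, Matrix.smul_apply, vecMulVec_apply, Pi.neg_apply, Pi.smul_apply,
    Pi.sub_apply, smul_eq_mul]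
  ring

end InverseHomography

section Transform

variable {n : ℕ} {A A' : Matrix (Fin n) (Fin n) ℝ} {b b' c c' : Fin n → ℝ} {d d' : ℝ}

lemma inv_homogJac (h₁ : A' * A + vecMulVec b' c = 1) (h₂ : A' *ᵥ b + d • b' = 0)
    (h₃ : c' ᵥ* A + d' • c = 0) (h₄ : c' ⬝ᵥ b + d' * d = 1) {x : Fin n → ℝ}
    (hx : c ⬝ᵥ x + d ≠ 0) :
    (homogJac A b c d x)⁻¹ = (c ⬝ᵥ x + d) • (A' - vecMulVec x c') := by
  refine Matrix.inv_eq_left_inv ?_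
  rw [homogJac, Matrix.smul_mul, Matrix.mul_smul, sub_vecMulVec_mul_affine h₁ h₂ h₃ h₄, smul_smul,
    smul_smul]
  field_simp
  rw [one_smul]

lemma Tg_eq_smul_mul_mul_transpose (h₁ : A' * A + vecMulVec b' c = 1)
    (h₂ : A' *ᵥ b + d • b' = 0) (h₃ : c' ᵥ* A + d' • c = 0) (h₄ : c' ⬝ᵥ b + d' * d = 1)
    (V : (Fin n → ℝ) → Matrix (Fin n) (Fin n) ℝ) {x : Fin n → ℝ} (hx : c ⬝ᵥ x + d ≠ 0) :
    Tg A b c d V x = (c ⬝ᵥ x + d) • ((A' - vecMulVec x c') *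
      V ((c ⬝ᵥ x + d)⁻¹ • (A *ᵥ x + b)) * (A' - vecMulVec x c')ᵀ) := by
  rw [Tg, ← transpose_nonsing_inv, inv_homogJac h₁ h₂ h₃ h₄ hx, transpose_smul, Matrix.smul_mul,
    Matrix.smul_mul, Matrix.mul_smul, smul_smul, smul_smul, inv_mul_cancel₀ hx, one_mul]
  rfl

end Transform

section SimpleQuadratic

variable {ι R : Type*} [Fintype ι] [CommRing R]

def simpleQuadratic (a : R) (B : ι → Matrix ι ι R) (C : Matrix ι ι R) (x : ι → R) :
    Matrix ι ι R :=
  a • vecMulVec x x + ∑ i, x i • B i + C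

def simpleQuadraticTransform (a : R) (B : ι → Matrix ι ι R) (C : Matrix ι ι R) (lam : R)
    (u w : ι → R) (N : Matrix ι ι R) : Matrix ι ι R :=
  (a * lam) • vecMulVec w w + ∑ i, u i • (N * B i * Nᵀ) + lam • (N * C * Nᵀ)

lemma smul_mul_simpleQuadratic_mul_transpose {K : Type*} [Field K] {a lam : K}
    {B : ι → Matrix ι ι K} {C N : Matrix ι ι K} {u w : ι → K} (hlam : lam ≠ 0)
    (hNu : N *ᵥ u = lam • w) :
    lam • (N * simpleQuadratic a B C (lam⁻¹ • u) * Nᵀ) =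
      simpleQuadraticTransform a B C lam u w N := by
  have hNw : N *ᵥ (lam⁻¹ • u) = w := by
    rw [mulVec_smul, hNu, smul_smul, inv_mul_cancel₀ hlam, one_smul]
  simp only [simpleQuadratic, simpleQuadraticTransform, Matrix.mul_add, Matrix.add_mul,
    Matrix.mul_smul, Matrix.smul_mul, mul_vecMulVec, vecMulVec_mul, vecMul_transpose, hNw,
    Matrix.mul_sum, Matrix.sum_mul, smul_add, Finset.smul_sum, smul_smul, Pi.smul_apply,
    smul_eq_mul, mul_inv_cancel_left₀ hlam, mul_comm lam a]

lemma simpleQuadraticTransform_isSymm {a lam : R} {B : ι → Matrix ι ι R} {C N : Matrix ι ι R}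
    {u w : ι → R} (hB : ∀ i, (B i).IsSymm) (hC : C.IsSymm) :
    (simpleQuadraticTransform a B C lam u w N).IsSymm := by
  simp only [simpleQuadraticTransform, IsSymm, transpose_add, transpose_smul,
    transpose_sum _ (fun i => _ • _), transpose_vecMulVec, transpose_mul, transpose_transpose, (hB _).eq, hC.eq, Matrix.mul_assoc]

lemma map_simpleQuadraticTransform {S : Type*} [CommRing S] (f : R →+* S) (a lam : R)
    (B : ι → Matrix ι ι R) (C N : Matrix ι ι R) (u w : ι → R) :
    (simpleQuadraticTransform a B C lam u w N).map f =
      simpleQuadraticTransform (f a) (fun i => (B i).map f) (C.map f) (f lam) (f ∘ u) (f ∘ w)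
        (N.map f) := by
  ext i j
  simp [simpleQuadraticTransform, Matrix.mul_apply, vecMulVec_apply, map_sum, Matrix.sum_apply]

end SimpleQuadratic

section Degree

open MvPolynomial

variable {σ ι R : Type*} [Fintype ι] [CommRing R]

lemma totalDegree_dotProduct_le {v w : ι → MvPolynomial σ R} {p q : ℕ}
    (hv : ∀ i, (v i).totalDegree ≤ p) (hw : ∀ i, (w i).totalDegree ≤ q) :
    (v ⬝ᵥ w).totalDegree ≤ p + q :=
  totalDegree_finsetSum_le fun i _ => (totalDegree_mul _ _).trans (add_le_add (hv i) (hw i))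

lemma totalDegree_mul_apply_le {l o : Type*} {M : Matrix l ι (MvPolynomial σ R)}
    {N : Matrix ι o (MvPolynomial σ R)} {p q : ℕ} (hM : ∀ i j, (M i j).totalDegree ≤ p)
    (hN : ∀ i j, (N i j).totalDegree ≤ q) (i : l) (j : o) :
    ((M * N) i j).totalDegree ≤ p + q :=
  totalDegree_dotProduct_le (hM i) (fun k => hN k j)

lemma totalDegree_simpleQuadraticTransform_le {a lam : MvPolynomial σ R}
    {B : ι → Matrix ι ι (MvPolynomial σ R)} {C N : Matrix ι ι (MvPolynomial σ R)}
    {u w : ι → MvPolynomial σ R} (ha : a.totalDegree ≤ 0)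
    (hB : ∀ k i j, (B k i j).totalDegree ≤ 0) (hC : ∀ i j, (C i j).totalDegree ≤ 0)
    (hlam : lam.totalDegree ≤ 1) (hu : ∀ i, (u i).totalDegree ≤ 1)
    (hw : ∀ i, (w i).totalDegree ≤ 1) (hN : ∀ i j, (N i j).totalDegree ≤ 1) (i j : ι) :
    ((simpleQuadraticTransform a B C lam u w N) i j).totalDegree ≤ 3 := by
  have hconj : ∀ M : Matrix ι ι (MvPolynomial σ R), (∀ i j, (M i j).totalDegree ≤ 0) →
      ((N * M * Nᵀ) i j).totalDegree ≤ 2 := fun M hM =>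
    totalDegree_mul_apply_le (totalDegree_mul_apply_le hN hM) (fun i j => hN j i) i j
  simp only [simpleQuadraticTransform, Matrix.add_apply, Matrix.smul_apply, vecMulVec_apply,
    Matrix.sum_apply, smul_eq_mul]
  refine (totalDegree_add _ _).trans (max_le ((totalDegree_add _ _).trans (max_le ?_ ?_)) ?_)
  · calc _ ≤ (a * lam).totalDegree + (w i * w j).totalDegree := totalDegree_mul _ _
      _ ≤ (0 + 1) + (1 + 1) :=
        add_le_add ((totalDegree_mul _ _).trans (add_le_add ha hlam))
          ((totalDegree_mul _ _).trans (add_le_add (hw i) (hw j)))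
  · exact totalDegree_finsetSum_le fun k _ =>
      (totalDegree_mul _ _).trans (add_le_add (hu k) (hconj _ (hB k)))
  · exact (totalDegree_mul _ _).trans (add_le_add hlam (hconj _ hC))

end Degree

section Polynomial

open MvPolynomial

variable {ι R : Type*} [Fintype ι] [CommRing R]

lemma exists_polynomial_eval_eq_simpleQuadraticTransform [Nontrivial R] (a : R)
    {B : ι → Matrix ι ι R} {C : Matrix ι ι R} (hB : ∀ i, (B i).IsSymm) (hC : C.IsSymm)
    (A A' : Matrix ι ι R) (b b' c c' : ι → R) (d d' : R) :
    ∃ P : Matrix ι ι (MvPolynomial ι R), P.IsSymm ∧ (∀ i j, (P i j).totalDegree ≤ 3) ∧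
      ∀ x, P.map (eval x) = simpleQuadraticTransform a B C (c ⬝ᵥ x + d) (A *ᵥ x + b)
        (d' • x - b') (A' - vecMulVec x c') := by
  have hC₀ : ∀ (r : R) (k : ℕ), (MvPolynomial.C r : MvPolynomial ι R).totalDegree ≤ k :=
    fun r k => (totalDegree_C r).trans_le k.zero_le
  have hX : ∀ i, (X i : MvPolynomial ι R).totalDegree ≤ 1 := fun i => (totalDegree_X (R := R) i).le
  refine ⟨simpleQuadraticTransform (MvPolynomial.C a) (fun k => (B k).map MvPolynomial.C)
    (C.map MvPolynomial.C) ((MvPolynomial.C ∘ c) ⬝ᵥ X + MvPolynomial.C d)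
    (A.map MvPolynomial.C *ᵥ X + MvPolynomial.C ∘ b)
    (MvPolynomial.C (σ := ι) d' • X - MvPolynomial.C ∘ b')
    (A'.map MvPolynomial.C - vecMulVec X (MvPolynomial.C ∘ c')),
    simpleQuadraticTransform_isSymm (fun k => (hB k).map _) (hC.map _),
    totalDegree_simpleQuadraticTransform_le (hC₀ a 0) (fun k i j => hC₀ _ _) (fun i j => hC₀ _ _)
      ?_ ?_ ?_ ?_, fun x => ?_⟩
  · exact (totalDegree_add _ _).trans
      (max_le (totalDegree_dotProduct_le (fun i => hC₀ _ _) hX) (hC₀ d _))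
  · exact fun i => (totalDegree_add _ _).trans
      (max_le (totalDegree_dotProduct_le (fun j => hC₀ _ _) hX) (hC₀ _ _))
  · exact fun i => (totalDegree_sub _ _).trans
      (max_le ((totalDegree_mul _ _).trans (add_le_add (hC₀ d' 0) (hX i))) (hC₀ _ _))
  · exact fun i j => (totalDegree_sub _ _).trans
      (max_le (hC₀ _ _) ((totalDegree_mul _ _).trans (add_le_add (hX i) (hC₀ _ 0))))
  · rw [map_simpleQuadraticTransform]
    congr 1
    · simp
    · ext k i j; simp
    · ext i j; simp
    · simp [RingHom.map_dotProduct, Function.comp_def]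
    · ext i; simp [RingHom.map_mulVec, Function.comp_def]
    · ext i; simp
    · ext i j; simp [vecMulVec_apply]

end Polynomial

theorem Tg_of_simple_quadratic_is_cubic_polynomial_general {n : ℕ}
    (a : ℝ) (B : Fin n → Matrix (Fin n) (Fin n) ℝ) (C : Matrix (Fin n) (Fin n) ℝ)
    (hB : ∀ i, (B i).IsSymm) (hC : C.IsSymm)
    (A : Matrix (Fin n) (Fin n) ℝ) (b c : Fin n → ℝ) (d : ℝ)
    (hg : (blockMat A b c d).det ≠ 0) :
    ∃ P : Matrix (Fin n) (Fin n) (MvPolynomial (Fin n) ℝ),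
      (∀ i j, P i j = P j i) ∧
      (∀ i j, (P i j).totalDegree ≤ 3) ∧
      (∀ m : Fin n → ℝ, 0 < c ⬝ᵥ m + d →
        Tg A b c d (fun x => a • vecMulVec x x + (∑ i, x i • B i) + C) m
          = Matrix.of fun i j => MvPolynomial.eval m (P i j)) := by
  obtain ⟨A', b', c', d', h₁, h₂, h₃, h₄⟩ := exists_blockMat_left_inverse hg
  obtain ⟨P, hP_symm, hP_deg, hP_eval⟩ :=
    exists_polynomial_eval_eq_simpleQuadraticTransform a hB hC A A' b b' c c' d d'
  refine ⟨P, fun i j => hP_symm.apply j i, hP_deg, fun m hm => ?_⟩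
  rw [Tg_eq_smul_mul_mul_transpose h₁ h₂ h₃ h₄ _ hm.ne']
  exact (smul_mul_simpleQuadratic_mul_transpose hm.ne'
    (sub_vecMulVec_mulVec_affine h₁ h₂ h₃ h₄ m)).trans (hP_eval m).symm

/-- **Theorem 5.2.** If `V(m) = a mmᵀ + m₁B₁ + ⋯ + mₙBₙ + C` is a simple quadratic matrix
function and `g` is invertible, then `T_g(V)` is given by a symmetric matrix of polynomials of
total degree at most `3` on the half space `cᵀm + d > 0`. -/
theorem Tg_of_simple_quadratic_is_cubic_polynomial {n : ℕ} (hn : 1 ≤ n)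
    (a : ℝ) (B : Fin n → Matrix (Fin n) (Fin n) ℝ) (C : Matrix (Fin n) (Fin n) ℝ)
    (hB : ∀ i, (B i).IsSymm) (hC : C.IsSymm)
    (A : Matrix (Fin n) (Fin n) ℝ) (b c : Fin n → ℝ) (d : ℝ)
    (hg : (blockMat A b c d).det ≠ 0) :
    ∃ P : Matrix (Fin n) (Fin n) (MvPolynomial (Fin n) ℝ),
      (∀ i j, P i j = P j i) ∧
      (∀ i j, (P i j).totalDegree ≤ 3) ∧
      (∀ m : Fin n → ℝ, 0 < c ⬝ᵥ m + d →
        Tg A b c d (fun x => a • vecMulVec x x + (∑ i, x i • B i) + C) m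
          = Matrix.of fun i j => MvPolynomial.eval m (P i j)) :=
  Tg_of_simple_quadratic_is_cubic_polynomial_general a B C hB hC A b c d hg
end

section
/- For g_c = [[Iₙ, 0], [cᵀ, 1]] with c ∈ ℝⁿ, and for every m ∈ ℝⁿ with cᵀm + 1 > 0, the following three identities hold: (i) if V(m) = mmᵀ then T_{g_c}(V)(m) = (cᵀm + 1)·mmᵀ; (ii) if V(m) = m₁B₁ + ⋯ + mₙBₙ with B₁, …, Bₙ real symmetric n×n matrices, then T_{g_c}(V)(m) = (Iₙ + mcᵀ)·V(m)·(Iₙ + cmᵀ); (iii) if V(m) = C is a constant real symmetric n×n matrix, then T_{g_c}(V)(m) = (cᵀm + 1)·(Iₙ + mcᵀ)·C·(Iₙ + cmᵀ). -/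
open Matrix

/-!
With `t = cᵀm + 1`, the Jacobian of `h_{g_c}` at `m` is the rank-one perturbation
`t⁻² (t - m cᵀ)` of a scalar matrix, which Sherman–Morrison inverts to `t (1 + m cᵀ)`. Hence
`T_{g_c}(V)(m) = t (1 + m cᵀ) V(m / t) (1 + c mᵀ)`, and the three formulas follow from the
homogeneity of `V` of degree `2`, `1` and `0`, together with `(1 + m cᵀ) m = t m` in the
quadratic case.
-/

section RankOneUpdate

variable {ι R : Type*} [Fintype ι] [DecidableEq ι] [CommRing R]

theorem one_add_vecMulVec_mulVec (u v : ι → R) :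
    (1 + vecMulVec u v) *ᵥ u = (v ⬝ᵥ u + 1) • u := by
  rw [add_mulVec, one_mulVec, vecMulVec_mulVec, op_smul_eq_smul, add_smul, one_smul, add_comm]

theorem vecMul_one_add_vecMulVec (u v : ι → R) :
    v ᵥ* (1 + vecMulVec u v) = (v ⬝ᵥ u + 1) • v := by
  rw [vecMul_add, vecMul_one, vecMul_vecMulVec, add_smul, one_smul, add_comm]

-- Sherman–Morrison, with the denominator `vᵀu + 1` cleared.
theorem smul_one_sub_vecMulVec_mul_one_add_vecMulVec (u v : ι → R) :
    ((v ⬝ᵥ u + 1) • 1 - vecMulVec u v) * (1 + vecMulVec u v) = (v ⬝ᵥ u + 1) • 1 := by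
  have hsq : vecMulVec u v * vecMulVec u v = (v ⬝ᵥ u) • vecMulVec u v := by
    rw [vecMulVec_mul_vecMulVec, vecMulVec_smul]
  simp only [sub_mul, mul_add, smul_mul_assoc, one_mul, mul_one, hsq]
  module

end RankOneUpdate

section HomographyGc

variable {n : ℕ} (c m : Fin n → ℝ)

theorem homog_one_zero_one : homog 1 0 c 1 m = (c ⬝ᵥ m + 1)⁻¹ • m := by
  simp [homog]

theorem inv_homogJac_one_zero_one (hm : c ⬝ᵥ m + 1 ≠ 0) :
    (homogJac 1 0 c 1 m)⁻¹ = (c ⬝ᵥ m + 1) • (1 + vecMulVec m c) := by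
  refine inv_eq_right_inv ?_
  rw [homogJac, one_mulVec, add_zero, Matrix.smul_mul, Matrix.mul_smul,
    smul_one_sub_vecMulVec_mul_one_add_vecMulVec, smul_smul, smul_smul,
    show ((c ⬝ᵥ m + 1) ^ 2)⁻¹ * (c ⬝ᵥ m + 1) * (c ⬝ᵥ m + 1) = 1 by field_simp, one_smul]

theorem Tg_one_zero_one (V : (Fin n → ℝ) → Matrix (Fin n) (Fin n) ℝ) (hm : c ⬝ᵥ m + 1 ≠ 0) :
    Tg 1 0 c 1 V m = (c ⬝ᵥ m + 1) •
      ((1 + vecMulVec m c) * V ((c ⬝ᵥ m + 1)⁻¹ • m) * (1 + vecMulVec c m)) := by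
  rw [Tg, homog_one_zero_one, ← transpose_nonsing_inv, inv_homogJac_one_zero_one c m hm,
    transpose_smul, transpose_add, transpose_one, transpose_vecMulVec]
  simp only [Matrix.smul_mul, Matrix.mul_smul, smul_smul]
  congr 1
  field_simp

end HomographyGc

theorem Tg_gc_formulas_general {n : ℕ} (c : Fin n → ℝ)
    (B : Fin n → Matrix (Fin n) (Fin n) ℝ)
    (C : Matrix (Fin n) (Fin n) ℝ)
    (m : Fin n → ℝ) (hm : 0 < c ⬝ᵥ m + 1) :
    Tg 1 0 c 1 (fun x => vecMulVec x x) m = (c ⬝ᵥ m + 1) • vecMulVec m m ∧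
    Tg 1 0 c 1 (fun x => ∑ i, x i • B i) m
      = (1 + vecMulVec m c) * (∑ i, m i • B i) * (1 + vecMulVec c m) ∧
    Tg 1 0 c 1 (fun _ => C) m
      = (c ⬝ᵥ m + 1) • ((1 + vecMulVec m c) * C * (1 + vecMulVec c m)) := by
  have ht : c ⬝ᵥ m + 1 ≠ 0 := hm.ne'
  refine ⟨?_, ?_, Tg_one_zero_one c m _ ht⟩
  · have hleft : (1 + vecMulVec m c) * vecMulVec m m = (c ⬝ᵥ m + 1) • vecMulVec m m := by
      rw [mul_vecMulVec, one_add_vecMulVec_mulVec, smul_vecMulVec]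
    have hright : vecMulVec m m * (1 + vecMulVec c m) = (c ⬝ᵥ m + 1) • vecMulVec m m := by
      rw [vecMulVec_mul, dotProduct_comm, vecMul_one_add_vecMulVec, vecMulVec_smul]
    rw [Tg_one_zero_one c m _ ht, smul_vecMulVec, vecMulVec_smul]
    simp only [Matrix.mul_smul, Matrix.smul_mul, hleft, hright, smul_smul]
    congr 1
    field_simp
  · have hlin : ∑ i, ((c ⬝ᵥ m + 1)⁻¹ • m) i • B i = (c ⬝ᵥ m + 1)⁻¹ • ∑ i, m i • B i := by
      simp only [Pi.smul_apply, smul_eq_mul, Finset.smul_sum, mul_smul]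
    rw [Tg_one_zero_one c m _ ht, hlin, Matrix.mul_smul, Matrix.smul_mul, smul_smul,
      mul_inv_cancel₀ ht, one_smul]

/-- The three remarkable formulas for `T_{g_c}` applied to the quadratic part `mmᵀ`, to a linear
part `B(m) = m₁B₁ + ⋯ + mₙBₙ` and to a constant part `C`, where `g_c = [[Iₙ, 0], [cᵀ, 1]]`. -/
theorem Tg_gc_formulas {n : ℕ} (hn : 1 ≤ n) (c : Fin n → ℝ)
    (B : Fin n → Matrix (Fin n) (Fin n) ℝ) (hB : ∀ i, (B i).IsSymm)
    (C : Matrix (Fin n) (Fin n) ℝ) (hC : C.IsSymm)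
    (m : Fin n → ℝ) (hm : 0 < c ⬝ᵥ m + 1) :
    Tg 1 0 c 1 (fun x => vecMulVec x x) m = (c ⬝ᵥ m + 1) • vecMulVec m m ∧
    Tg 1 0 c 1 (fun x => ∑ i, x i • B i) m
      = (1 + vecMulVec m c) * (∑ i, m i • B i) * (1 + vecMulVec c m) ∧
    Tg 1 0 c 1 (fun _ => C) m
      = (c ⬝ᵥ m + 1) • ((1 + vecMulVec m c) * C * (1 + vecMulVec c m)) :=
  Tg_gc_formulas_general c B C m hm
end

section
/- (Proposition 5.3.) Let n ≥ 1, let 1 ≤ i < j ≤ n, let A be the n×n permutation matrix of the transposition exchanging coordinates i and j, and let g₀ = [[A, 0], [0, 1]] ∈ GL(n+1, ℝ). For b, c ∈ ℝⁿ let g_{b,c} = [[Iₙ + bcᵀ, b], [cᵀ, 1]] (which is invertible). Let D(m) = diag(m₁, …, mₙ) and E(m) = mmᵀ. Then for every m ∈ ℝⁿ with cᵀAm + 1 > 0: T_{g₀}(T_{g_{b,c}}(D))(m) = T_{g_{Ab,Ac}}(D)(m) and T_{g₀}(T_{g_{b,c}}(E))(m) = T_{g_{Ab,Ac}}(E)(m).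 -/
open Matrix

/-!
For `g₀ = diag(P, 1)` with `P` invertible, the congruent matrix `g₀ᵀ g g₀` has homography
`x ↦ Pᵀ h_g(Px)`, Jacobian `Pᵀ h'_g(Px) P` and the same denominator as `h_g` at `Px`. Hence
`T_{g₀}(T_g V) = T_{g₀ᵀ g g₀}(V')` whenever `V'(Pᵀy) = Pᵀ V(y) P`. A permutation matrix is
orthogonal, so `g₀ᵀ g_{b,c} g₀ = g_{Pᵀb, Pᵀc}`, and both `diag(y)` and `yyᵀ` satisfy that transport
rule with `V' = V`; for a transposition `Pᵀ = P`.
-/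

section Matrices

variable {ι R : Type*} [Fintype ι] [CommRing R]

lemma vecMulVec_transpose_mulVec_self (P : Matrix ι ι R) (y : ι → R) :
    vecMulVec (Pᵀ *ᵥ y) (Pᵀ *ᵥ y) = Pᵀ * vecMulVec y y * P := by
  rw [mul_vecMulVec, vecMulVec_mul, mulVec_transpose]

variable [DecidableEq ι]

lemma transpose_permMatrix_mul_self (σ : Equiv.Perm ι) :
    (σ.permMatrix R)ᵀ * σ.permMatrix R = 1 := by
  rw [transpose_permMatrix, ← permMatrix_mul, mul_inv_cancel, permMatrix_one]

lemma diagonal_transpose_permMatrix_mulVec (σ : Equiv.Perm ι) (y : ι → R) :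
    diagonal ((σ.permMatrix R)ᵀ *ᵥ y) = (σ.permMatrix R)ᵀ * diagonal y * σ.permMatrix R := by
  rw [transpose_permMatrix, permMatrix_mulVec, PEquiv.toMatrix_toPEquiv_mul,
    PEquiv.mul_toMatrix_toPEquiv, submatrix_submatrix]
  exact (submatrix_diagonal_equiv y σ⁻¹).symm

lemma transpose_mul_one_add_vecMulVec_mul (P : Matrix ι ι R) (hP : Pᵀ * P = 1) (b c : ι → R) :
    Pᵀ * (1 + vecMulVec b c) * P = 1 + vecMulVec (Pᵀ *ᵥ b) (Pᵀ *ᵥ c) := by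
  rw [Matrix.mul_add, Matrix.add_mul, Matrix.mul_one, hP, mul_vecMulVec, vecMulVec_mul,
    ← mulVec_transpose]

end Matrices

variable {n : ℕ}

section BlockDiagonal

variable (P : Matrix (Fin n) (Fin n) ℝ) (x : Fin n → ℝ)

lemma homog_blockDiagonal : homog P 0 0 1 x = P *ᵥ x := by
  simp [homog]

lemma homogJac_blockDiagonal : homogJac P 0 0 1 x = P := by
  simp [homogJac]

lemma Tg_blockDiagonal (V : (Fin n → ℝ) → Matrix (Fin n) (Fin n) ℝ) :
    Tg P 0 0 1 V x = P⁻¹ * V (P *ᵥ x) * Pᵀ⁻¹ := by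
  simp [Tg, homog_blockDiagonal, homogJac_blockDiagonal]

end BlockDiagonal

section Homography

variable (P A : Matrix (Fin n) (Fin n) ℝ) (b c : Fin n → ℝ) (d : ℝ) (x : Fin n → ℝ)

lemma transpose_mulVec_dotProduct (v w : Fin n → ℝ) : Pᵀ *ᵥ v ⬝ᵥ w = v ⬝ᵥ P *ᵥ w := by
  rw [mulVec_transpose, dotProduct_mulVec]

lemma homog_transpose_mul_mul :
    homog (Pᵀ * A * P) (Pᵀ *ᵥ b) (Pᵀ *ᵥ c) d x = Pᵀ *ᵥ homog A b c d (P *ᵥ x) := by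
  simp only [homog, transpose_mulVec_dotProduct, mulVec_smul, mulVec_add, mulVec_mulVec,
    Matrix.mul_assoc]

lemma homogJac_transpose_mul_mul :
    homogJac (Pᵀ * A * P) (Pᵀ *ᵥ b) (Pᵀ *ᵥ c) d x = Pᵀ * homogJac A b c d (P *ᵥ x) * P := by
  have hvec : (Pᵀ * A * P) *ᵥ x + Pᵀ *ᵥ b = Pᵀ *ᵥ (A *ᵥ (P *ᵥ x) + b) := by
    simp only [mulVec_add, mulVec_mulVec, Matrix.mul_assoc]
  simp only [homogJac, transpose_mulVec_dotProduct, hvec, Matrix.mul_smul, Matrix.smul_mul,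
    Matrix.mul_sub, Matrix.sub_mul, mul_vecMulVec, vecMulVec_mul, ← mulVec_transpose]

theorem Tg_blockDiagonal_Tg (hP : IsUnit P.det) (V V' : (Fin n → ℝ) → Matrix (Fin n) (Fin n) ℝ)
    (hV : ∀ y, V' (Pᵀ *ᵥ y) = Pᵀ * V y * P) :
    Tg P 0 0 1 (Tg A b c d V) x = Tg (Pᵀ * A * P) (Pᵀ *ᵥ b) (Pᵀ *ᵥ c) d V' x := by
  have hPT : IsUnit Pᵀ.det := by rwa [det_transpose]
  rw [Tg_blockDiagonal, Tg, Tg, homog_transpose_mul_mul, homogJac_transpose_mul_mul, hV, transpose_mulVec_dotProduct]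
  simp only [transpose_mul, transpose_transpose, Matrix.mul_inv_rev, Matrix.mul_smul,
    Matrix.smul_mul, Matrix.mul_assoc, nonsing_inv_mul_cancel_left Pᵀ _ hPT,
    mul_nonsing_inv_cancel_left P _ hP]

end Homography

theorem Tg_permutation_conjugation_general {n : ℕ}
    (i j : Fin n) (b c : Fin n → ℝ) (m : Fin n → ℝ) :
    (Tg ((Equiv.swap i j).permMatrix ℝ) 0 0 1
        (fun x => Tg (1 + vecMulVec b c) b c 1 (fun y => Matrix.diagonal y) x) m
      = Tg (1 + vecMulVec (((Equiv.swap i j).permMatrix ℝ).mulVec b)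
              (((Equiv.swap i j).permMatrix ℝ).mulVec c))
          (((Equiv.swap i j).permMatrix ℝ).mulVec b)
          (((Equiv.swap i j).permMatrix ℝ).mulVec c) 1
          (fun y => Matrix.diagonal y) m) ∧
    (Tg ((Equiv.swap i j).permMatrix ℝ) 0 0 1
        (fun x => Tg (1 + vecMulVec b c) b c 1 (fun y => vecMulVec y y) x) m
      = Tg (1 + vecMulVec (((Equiv.swap i j).permMatrix ℝ).mulVec b)
              (((Equiv.swap i j).permMatrix ℝ).mulVec c))
          (((Equiv.swap i j).permMatrix ℝ).mulVec b)
          (((Equiv.swap i j).permMatrix ℝ).mulVec c) 1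
          (fun y => vecMulVec y y) m) := by
  set P := (Equiv.swap i j).permMatrix ℝ
  have hPT : Pᵀ = P := by rw [transpose_permMatrix, Equiv.swap_inv]
  have hO : Pᵀ * P = 1 := transpose_permMatrix_mul_self _
  have hD := Tg_blockDiagonal_Tg P (1 + vecMulVec b c) b c 1 m (isUnit_det_of_left_inverse hO)
    (fun y => diagonal y) (fun y => diagonal y) (diagonal_transpose_permMatrix_mulVec _)
  have hE := Tg_blockDiagonal_Tg P (1 + vecMulVec b c) b c 1 m (isUnit_det_of_left_inverse hO)
    (fun y => vecMulVec y y) (fun y => vecMulVec y y) (vecMulVec_transpose_mulVec_self P)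
  rw [transpose_mul_one_add_vecMulVec_mul P hO, hPT] at hD hE
  exact ⟨hD, hE⟩

/-- **Proposition 5.3.** Conjugating `T_{g_{b,c}}` by the permutation of two coordinates acts on
`D(m) = diag(m)` and `E(m) = mmᵀ` as the replacement `(b, c) ↦ (Ab, Ac)`, where `A` is the
permutation matrix of the transposition `(i, j)` and `g₀ = diag(A, 1)`,
`g_{b,c} = [[Iₙ + bcᵀ, b], [cᵀ, 1]]`. -/
theorem Tg_permutation_conjugation {n : ℕ} (hn : 1 ≤ n)
    (i j : Fin n) (hij : i < j) (b c : Fin n → ℝ) (m : Fin n → ℝ)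
    (hm : 0 < c ⬝ᵥ ((Equiv.swap i j).permMatrix ℝ).mulVec m + 1) :
    (Tg ((Equiv.swap i j).permMatrix ℝ) 0 0 1
        (fun x => Tg (1 + vecMulVec b c) b c 1 (fun y => Matrix.diagonal y) x) m
      = Tg (1 + vecMulVec (((Equiv.swap i j).permMatrix ℝ).mulVec b)
              (((Equiv.swap i j).permMatrix ℝ).mulVec c))
          (((Equiv.swap i j).permMatrix ℝ).mulVec b)
          (((Equiv.swap i j).permMatrix ℝ).mulVec c) 1
          (fun y => Matrix.diagonal y) m) ∧
    (Tg ((Equiv.swap i j).permMatrix ℝ) 0 0 1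
        (fun x => Tg (1 + vecMulVec b c) b c 1 (fun y => vecMulVec y y) x) m
      = Tg (1 + vecMulVec (((Equiv.swap i j).permMatrix ℝ).mulVec b)
              (((Equiv.swap i j).permMatrix ℝ).mulVec c))
          (((Equiv.swap i j).permMatrix ℝ).mulVec b)
          (((Equiv.swap i j).permMatrix ℝ).mulVec c) 1
          (fun y => vecMulVec y y) m) :=
  Tg_permutation_conjugation_general i j b c m
end

section
/- (Part of Theorem 5.4: the Poisson–Gaussian and negative-multinomial–gamma classes are in the same G-orbit.) Let n ≥ 1 and 1 ≤ k ≤ n. Define V_{I,k}(m) = diag(m₁, …, m_k, 1, …, 1) on the open set M = (0,∞)^k × ℝ^{n−k}, and V_{IV,k}(m) = mmᵀ + diag(0, m₂, …, m_k, m₁, …, m₁), whose last n−k diagonal correction entries all equal m₁. Then there exist an invertible real (n+1)×(n+1) matrix g = [[A, b], [cᵀ, d]] and a nonempty open set U ⊆ { m ∈ ℝⁿ : cᵀm + d > 0 } with h_g(U) ⊆ M such that T_g(V_{I,k})(m) = V_{IV,k}(m) for all m ∈ U. -/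
open Matrix

/-- The Poisson–Gaussian variance function `V_{I,k}(m) = diag(m₁, …, m_k, 1, …, 1)` (with `Fin n`
indexed from `0`: entries of index `< k` are `m i`, the others are `1`). -/
noncomputable def VIk {n : ℕ} (k : ℕ) (m : Fin n → ℝ) : Matrix (Fin n) (Fin n) ℝ :=
  Matrix.diagonal fun i : Fin n => if (i : ℕ) < k then m i else 1

/-- The negative-multinomial–gamma variance function
`V_{IV,k}(m) = mmᵀ + diag(0, m₂, …, m_k, m₁, …, m₁)`. -/
noncomputable def VIVk {n : ℕ} (hn : 1 ≤ n) (k : ℕ) (m : Fin n → ℝ) :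
    Matrix (Fin n) (Fin n) ℝ :=
  vecMulVec m m +
    Matrix.diagonal fun i : Fin n =>
      if (i : ℕ) = 0 then 0 else if (i : ℕ) < k then m i else m ⟨0, hn⟩

/-! With `e` a unit vector, `g = [[1 - e eᵀ, e], [eᵀ, 0]]` is the reflection of `ℝⁿ⁺¹` in the
hyperplane orthogonal to `(e, -1)`, so `g² = 1`. For `e = e₁` its homography is
`h_g(m) = (1, m₂, …, mₙ) / m₁`, and with `P = 1 - e eᵀ` the Jacobian has the explicit inverse
`(e ⬝ m) (P - m eᵀ)`. Hence, whenever `e` is an eigenvector of `S = V(h_g(m))` for the eigenvalue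
`s` on both sides, `T_g(V)(m) = (e ⬝ m) P S P + (e ⬝ m) s m mᵀ`. For `V = V_{I,k}` the matrix `S` is
diagonal with `s = 1/m₁`, and `m₁ P S P + m mᵀ` is exactly `V_{IV,k}(m)`. -/

section HyperplaneProj

variable {ι R : Type*} [DecidableEq ι] [CommRing R]

def hyperplaneProj (e : ι → R) : Matrix ι ι R := 1 - vecMulVec e e

theorem transpose_hyperplaneProj (e : ι → R) : (hyperplaneProj e)ᵀ = hyperplaneProj e := by
  rw [hyperplaneProj, transpose_sub, transpose_one, transpose_vecMulVec]

theorem hyperplaneProj_single (z : ι) :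
    hyperplaneProj (Pi.single z (1 : R)) = diagonal (Function.update 1 z 0) := by
  ext i j
  rcases eq_or_ne i j with rfl | hij
  · by_cases hi : i = z <;> simp [hyperplaneProj, vecMulVec_apply, hi]
  · simp only [hyperplaneProj, Matrix.sub_apply, vecMulVec_apply, one_apply_ne hij,
      diagonal_apply_ne _ hij, Pi.single_apply]
    split_ifs with hi hj <;> simp_all

variable [Fintype ι]

theorem one_sub_vecMulVec_mul_self {u : ι → R} (hu : u ⬝ᵥ u = 2) :
    (1 - vecMulVec u u) * (1 - vecMulVec u u) = 1 := by
  rw [sub_mul, mul_sub, mul_sub, vecMulVec_mul_vecMulVec, hu, vecMulVec_smul]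
  simp only [one_mul, mul_one, two_smul]
  abel

variable {e : ι → R}

theorem hyperplaneProj_mulVec_self (he : e ⬝ᵥ e = 1) : hyperplaneProj e *ᵥ e = 0 := by
  rw [hyperplaneProj, sub_mulVec, one_mulVec, vecMulVec_mulVec, he]
  simp

theorem vecMul_hyperplaneProj_self (he : e ⬝ᵥ e = 1) : e ᵥ* hyperplaneProj e = 0 := by
  rw [hyperplaneProj, vecMul_sub, vecMul_one, vecMul_vecMulVec, he, one_smul, sub_self]

theorem hyperplaneProj_mul_self (he : e ⬝ᵥ e = 1) :
    hyperplaneProj e * hyperplaneProj e = hyperplaneProj e := by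
  conv_lhs => enter [2]; rw [hyperplaneProj]
  rw [mul_sub, mul_one, mul_vecMulVec, hyperplaneProj_mulVec_self he, zero_vecMulVec, sub_zero]

theorem hyperplaneProj_sub_vecMulVec_sandwich {m : ι → R} {S : Matrix ι ι R} {s : R}
    (he : e ⬝ᵥ e = 1) (hSe : S *ᵥ e = s • e) (heS : e ᵥ* S = s • e) :
    (hyperplaneProj e - vecMulVec m e) * S * (hyperplaneProj e - vecMulVec e m) =
      hyperplaneProj e * S * hyperplaneProj e + s • vecMulVec m m := by
  rw [sub_mul, sub_mul, mul_sub, mul_sub, mul_vecMulVec, ← mulVec_mulVec, hSe, mulVec_smul,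
    hyperplaneProj_mulVec_self he, smul_zero, zero_vecMulVec, vecMulVec_mul, vecMulVec_mul, heS,
    smul_vecMul, vecMul_hyperplaneProj_self he, smul_zero, vecMulVec_zero, vecMulVec_mul_vecMulVec,
    smul_dotProduct, he, vecMulVec_smul, smul_eq_mul, mul_one]
  abel

variable (z : ι)

theorem single_dotProduct_single_self : Pi.single z (1 : R) ⬝ᵥ Pi.single z 1 = 1 := by
  rw [single_dotProduct, Pi.single_eq_same, one_mul]

theorem hyperplaneProj_single_mulVec_add (m : ι → R) :
    hyperplaneProj (Pi.single z 1) *ᵥ m + Pi.single z 1 = Function.update m z 1 := by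
  ext i
  by_cases hi : i = z <;> simp [hyperplaneProj_single, mulVec_diagonal, hi]

theorem diagonal_mulVec_single_one (v : ι → R) :
    diagonal v *ᵥ Pi.single z 1 = v z • Pi.single z 1 := by
  rw [diagonal_mulVec_single]
  ext i
  by_cases hi : i = z <;> simp [hi]

theorem single_one_vecMul_diagonal (v : ι → R) :
    Pi.single z 1 ᵥ* diagonal v = v z • Pi.single z 1 := by
  rw [single_vecMul_diagonal]
  ext i
  by_cases hi : i = z <;> simp [hi]

theorem hyperplaneProj_single_mul_diagonal_mul (v : ι → R) :
    hyperplaneProj (Pi.single z 1) * diagonal v * hyperplaneProj (Pi.single z 1) =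
      diagonal (Function.update v z 0) := by
  rw [hyperplaneProj_single, diagonal_mul_diagonal, diagonal_mul_diagonal]
  congr 1
  ext i
  by_cases hi : i = z <;> simp [hi]

end HyperplaneProj

section Homography

variable {n : ℕ} {e m : Fin n → ℝ}

theorem blockMat_hyperplaneProj (e : Fin n → ℝ) :
    blockMat (hyperplaneProj e) e e 0 =
      1 - vecMulVec (Sum.elim e fun _ => -1) (Sum.elim e fun _ => -1) := by
  ext (i | i) (j | j) <;> simp [blockMat, fromBlocks, hyperplaneProj, vecMulVec_apply, one_apply]

theorem det_blockMat_hyperplaneProj_ne_zero (he : e ⬝ᵥ e = 1) :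
    (blockMat (hyperplaneProj e) e e 0).det ≠ 0 := by
  refine det_ne_zero_of_right_inverse (B := blockMat (hyperplaneProj e) e e 0) ?_
  rw [blockMat_hyperplaneProj]
  refine one_sub_vecMulVec_mul_self ?_
  rw [sumElim_dotProduct_sumElim, he]
  norm_num [dotProduct]

theorem homog_hyperplaneProj_single (z : Fin n) (m : Fin n → ℝ) :
    homog (hyperplaneProj (Pi.single z 1)) (Pi.single z 1) (Pi.single z 1) 0 m =
      (m z)⁻¹ • Function.update m z 1 := by
  rw [homog, hyperplaneProj_single_mulVec_add, single_dotProduct, one_mul, add_zero]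

theorem homogJac_hyperplaneProj_mul (he : e ⬝ᵥ e = 1) (hm : e ⬝ᵥ m ≠ 0) :
    homogJac (hyperplaneProj e) e e 0 m * ((e ⬝ᵥ m) • (hyperplaneProj e - vecMulVec m e)) = 1 := by
  have key : ((e ⬝ᵥ m) • hyperplaneProj e - vecMulVec (hyperplaneProj e *ᵥ m + e) e) *
      (hyperplaneProj e - vecMulVec m e) = (e ⬝ᵥ m) • 1 := by
    rw [sub_mul, mul_sub, mul_sub, smul_mul_assoc, smul_mul_assoc, hyperplaneProj_mul_self he,
      mul_vecMulVec, vecMulVec_mul, vecMul_hyperplaneProj_self he, vecMulVec_mul_vecMulVec,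
      vecMulVec_zero, add_vecMulVec]
    simp only [vecMulVec_smul]
    rw [hyperplaneProj]
    module
  rw [homogJac, add_zero, mul_smul_comm, smul_mul_assoc, key, smul_smul, smul_smul,
    show (e ⬝ᵥ m) * ((e ⬝ᵥ m) ^ 2)⁻¹ * (e ⬝ᵥ m) = 1 by field_simp, one_smul]

theorem Tg_hyperplaneProj (he : e ⬝ᵥ e = 1) (hm : e ⬝ᵥ m ≠ 0)
    {V : (Fin n → ℝ) → Matrix (Fin n) (Fin n) ℝ} {s : ℝ}
    (hVe : V (homog (hyperplaneProj e) e e 0 m) *ᵥ e = s • e)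
    (heV : e ᵥ* V (homog (hyperplaneProj e) e e 0 m) = s • e) :
    Tg (hyperplaneProj e) e e 0 V m =
      (e ⬝ᵥ m) • (hyperplaneProj e * V (homog (hyperplaneProj e) e e 0 m) * hyperplaneProj e) +
        ((e ⬝ᵥ m) * s) • vecMulVec m m := by
  have hinv := inv_eq_right_inv (homogJac_hyperplaneProj_mul he hm)
  rw [Tg, ← transpose_nonsing_inv, hinv, transpose_smul, transpose_sub, transpose_hyperplaneProj,
    transpose_vecMulVec, add_zero]
  simp only [Matrix.smul_mul, Matrix.mul_smul, smul_smul]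
  rw [hyperplaneProj_sub_vecMulVec_sandwich he hVe heV, inv_mul_cancel_left₀ hm, smul_add,
    smul_smul]

end Homography

theorem Tg_VIk_eq_VIVk {n k : ℕ} (hn : 1 ≤ n) (hk : 1 ≤ k) {m : Fin n → ℝ} (hm : m ⟨0, hn⟩ ≠ 0) :
    Tg (hyperplaneProj (Pi.single ⟨0, hn⟩ 1)) (Pi.single ⟨0, hn⟩ 1) (Pi.single ⟨0, hn⟩ 1) 0
      (VIk k) m = VIVk hn k m := by
  set z : Fin n := ⟨0, hn⟩
  have hem : Pi.single z 1 ⬝ᵥ m = m z := by rw [single_dotProduct, one_mul]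
  have hvz : (if (z : ℕ) < k then homog (hyperplaneProj (Pi.single z 1)) (Pi.single z 1)
      (Pi.single z 1) 0 m z else 1) = (m z)⁻¹ := by
    simp [show (z : ℕ) < k from hk, homog_hyperplaneProj_single]
  rw [Tg_hyperplaneProj (single_dotProduct_single_self z) (hem ▸ hm) (s := (m z)⁻¹)
    (by rw [VIk, diagonal_mulVec_single_one, hvz]) (by rw [VIk, single_one_vecMul_diagonal, hvz]),
    VIk, hyperplaneProj_single_mul_diagonal_mul, hem, mul_inv_cancel₀ hm, one_smul, VIVk, add_comm,
    ← diagonal_smul]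
  congr 2
  ext i
  rcases eq_or_ne i z with rfl | hi
  · simp [z]
  · have hi0 : (i : ℕ) ≠ 0 := fun h => hi (Fin.ext h)
    by_cases hik : (i : ℕ) < k <;> simp [hi, hi0, hik, homog_hyperplaneProj_single, hm, z]

theorem VIk_VIVk_same_orbit_general {n k : ℕ} (hn : 1 ≤ n) (hk1 : 1 ≤ k) :
    ∃ (A : Matrix (Fin n) (Fin n) ℝ) (b c : Fin n → ℝ) (d : ℝ) (U : Set (Fin n → ℝ)),
      (blockMat A b c d).det ≠ 0 ∧
      U.Nonempty ∧ IsOpen U ∧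
      (∀ m ∈ U, 0 < c ⬝ᵥ m + d) ∧
      (∀ m ∈ U, ∀ i : Fin n, (i : ℕ) < k → 0 < homog A b c d m i) ∧
      (∀ m ∈ U, Tg A b c d (VIk k) m = VIVk hn k m) := by
  set z : Fin n := ⟨0, hn⟩
  refine ⟨hyperplaneProj (Pi.single z 1), Pi.single z 1, Pi.single z 1, 0,
    Set.univ.pi fun _ => Set.Ioi 0,
    det_blockMat_hyperplaneProj_ne_zero (single_dotProduct_single_self z),
    ⟨fun _ => 1, fun _ _ => Set.mem_Ioi.2 one_pos⟩,
    isOpen_set_pi Set.finite_univ fun _ _ => isOpen_Ioi, fun m hm => ?_, fun m hm i _ => ?_,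
    fun m hm => ?_⟩ <;> simp only [Set.mem_univ_pi, Set.mem_Ioi] at hm
  · rw [single_dotProduct, one_mul, add_zero]
    exact hm z
  · rw [homog_hyperplaneProj_single, Pi.smul_apply, smul_eq_mul]
    refine mul_pos (inv_pos.2 (hm z)) ?_
    by_cases hi : i = z <;> simp [hi, hm i]
  · exact Tg_VIk_eq_VIVk hn hk1 (hm z).ne'

/-- **Part of Theorem 5.4.** For each `1 ≤ k ≤ n`, the Poisson–Gaussian class `V_{I,k}` (with
domain of the means `(0,∞)^k × ℝ^{n−k}`) and the negative-multinomial–gamma class `V_{IV,k}` are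
in the same `G`-orbit: some `T_g` sends `V_{I,k}` to `V_{IV,k}` on a nonempty open set. -/
theorem VIk_VIVk_same_orbit {n k : ℕ} (hn : 1 ≤ n) (hk1 : 1 ≤ k) (hkn : k ≤ n) :
    ∃ (A : Matrix (Fin n) (Fin n) ℝ) (b c : Fin n → ℝ) (d : ℝ) (U : Set (Fin n → ℝ)),
      (blockMat A b c d).det ≠ 0 ∧
      U.Nonempty ∧ IsOpen U ∧
      (∀ m ∈ U, 0 < c ⬝ᵥ m + d) ∧
      (∀ m ∈ U, ∀ i : Fin n, (i : ℕ) < k → 0 < homog A b c d m i) ∧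
      (∀ m ∈ U, Tg A b c d (VIk k) m = VIVk hn k m) :=
  VIk_VIVk_same_orbit_general hn hk1
end

section
/- (Proposition 6.3, part 1.) Let n ≥ 1 and let (μ_k)_{k∈ℕⁿ} be nonnegative real numbers with μ₀ > 0 and μ_{e_i} > 0 for every standard basis vector e_i of ℝⁿ. Let Θ = { θ ∈ ℝⁿ : Σ_{k∈ℕⁿ} μ_k e^{⟨θ,k⟩} < ∞ } and assume the interior Θ° of Θ is nonempty. Define k(θ) = log ( Σ_{k∈ℕⁿ} μ_k e^{⟨θ,k⟩} ) for θ ∈ Θ°. Then: (i) for every θ ∈ Θ°, every coordinate of the gradient ∇k(θ) is strictly positive (so the domain of the means M = ∇k(Θ°) is contained in (0,∞)ⁿ); and (ii) 0 belongs to the closure of M = { ∇k(θ) : θ ∈ Θ° }. -/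
open scoped BigOperators

/-- The set `Θ(μ)` where the Laplace transform of `μ = Σ_{k∈ℕⁿ} μ_k δ_k` is finite. -/
def LaplaceDomain {n : ℕ} (μ : (Fin n → ℕ) → ℝ) : Set (Fin n → ℝ) :=
  {θ | Summable fun k : Fin n → ℕ => μ k * Real.exp (∑ i, θ i * (k i : ℝ))}

/-- The cumulant function `k(θ) = log Σ_{k∈ℕⁿ} μ_k e^{⟨θ,k⟩}`. -/
noncomputable def cumulant {n : ℕ} (μ : (Fin n → ℕ) → ℝ) (θ : Fin n → ℝ) : ℝ :=
  Real.log (∑' k : Fin n → ℕ, μ k * Real.exp (∑ i, θ i * (k i : ℝ)))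

/-!
On the interior of `Θ` the series `Σ_k μ_k e^{⟨θ,k⟩}` can be differentiated termwise, so
`∂ᵢk(θ) = Σ_k μ_k kᵢ e^{⟨θ,k⟩} / Σ_k μ_k e^{⟨θ,k⟩}`, and the term `k = eᵢ` makes it positive.
As `Θ` is a lower set, `θ₀ - t • 1 ∈ Θ°` for all `t ≥ 0`. Along this ray the denominator stays
`≥ μ₀`, while every term of the numerator has `kᵢ ≥ 1`, hence `|k| ≥ 1`, and so is multiplied by
at most `e^{-t}`: the gradient tends to `0`.
-/

open Filter Topology Metric

noncomputable section

variable {n : ℕ}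

def pairing (k : Fin n → ℕ) : (Fin n → ℝ) →L[ℝ] ℝ :=
  ∑ i, (k i : ℝ) • ContinuousLinearMap.proj i

lemma pairing_apply (k : Fin n → ℕ) (θ : Fin n → ℝ) : pairing k θ = ∑ i, θ i * k i := by
  simp [pairing, mul_comm]

lemma pairing_mono (k : Fin n → ℕ) : Monotone (pairing k) := fun θ θ' h => by
  simp only [pairing_apply]
  gcongr with i
  exact h i

lemma pairing_single (k : Fin n → ℕ) (i : Fin n) : pairing k (Pi.single i 1) = k i := by
  simp [pairing_apply, Pi.single_apply]

lemma pairing_nonneg (k : Fin n → ℕ) {θ : Fin n → ℝ} (hθ : 0 ≤ θ) : 0 ≤ pairing k θ := by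
  simpa using pairing_mono k hθ

lemma cast_le_pairing_one (k : Fin n → ℕ) (i : Fin n) : (k i : ℝ) ≤ pairing k 1 := by
  simp only [pairing_apply, Pi.one_apply, one_mul]
  exact Finset.single_le_sum (f := fun j => (k j : ℝ)) (fun j _ => by positivity)
    (Finset.mem_univ i)

lemma norm_pairing_le (k : Fin n → ℕ) : ‖pairing k‖ ≤ pairing k 1 := by
  refine ContinuousLinearMap.opNorm_le_bound _ (pairing_nonneg k zero_le_one) fun θ => ?_
  simp only [pairing_apply, Pi.one_apply, one_mul, Finset.sum_mul]
  refine (norm_sum_le _ _).trans (Finset.sum_le_sum fun i _ => ?_)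
  rw [norm_mul, Real.norm_natCast, mul_comm]
  gcongr
  exact norm_le_pi_norm θ i

lemma add_smul_one_mem_ball {ι : Type*} [Fintype ι] (θ : ι → ℝ) {δ r : ℝ} (hδ : 0 ≤ δ)
    (hδr : δ < r) : θ + δ • 1 ∈ ball θ r := by
  rw [mem_ball, dist_eq_norm, add_sub_cancel_left]
  refine lt_of_le_of_lt ((pi_norm_le_iff_of_nonneg hδ).2 fun i => ?_) hδr
  simp [abs_of_nonneg hδ]

lemma le_add_smul_one_of_mem_ball {ι : Type*} [Fintype ι] {x θ : ι → ℝ} {δ : ℝ}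
    (hx : x ∈ ball θ δ) : x ≤ θ + δ • 1 := fun i => by
  have := (norm_le_pi_norm (x - θ) i).trans_lt (mem_ball_iff_norm.1 hx)
  simp only [Pi.sub_apply, Real.norm_eq_abs] at this
  simp only [Pi.add_apply, Pi.smul_apply, Pi.one_apply, smul_eq_mul, mul_one]
  linarith [le_abs_self (x i - θ i)]

def laplaceTransform (μ : (Fin n → ℕ) → ℝ) (θ : Fin n → ℝ) : ℝ :=
  ∑' k, μ k * Real.exp (pairing k θ)

lemma cumulant_eq_log_laplaceTransform (μ : (Fin n → ℕ) → ℝ) :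
    cumulant μ = fun θ => Real.log (laplaceTransform μ θ) := by
  ext θ
  simp [cumulant, laplaceTransform, pairing_apply]

lemma mem_laplaceDomain_iff {μ : (Fin n → ℕ) → ℝ} {θ : Fin n → ℝ} :
    θ ∈ LaplaceDomain μ ↔ Summable fun k => μ k * Real.exp (pairing k θ) := by
  simp [LaplaceDomain, pairing_apply]

variable {μ : (Fin n → ℕ) → ℝ} {θ : Fin n → ℝ}

lemma isLowerSet_laplaceDomain (hμ : ∀ k, 0 ≤ μ k) : IsLowerSet (LaplaceDomain μ) := by
  intro θ θ' hle hθ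
  rw [mem_laplaceDomain_iff] at hθ ⊢
  refine hθ.of_nonneg_of_le (fun k => by have := hμ k; positivity) fun k => ?_
  gcongr
  · exact hμ k
  · exact pairing_mono k hle

lemma le_laplaceTransform (hμ : ∀ k, 0 ≤ μ k) (hθ : θ ∈ LaplaceDomain μ) :
    μ 0 ≤ laplaceTransform μ θ := by
  simpa [laplaceTransform, pairing] using
    (mem_laplaceDomain_iff.1 hθ).le_tsum 0 fun k _ => by have := hμ k; positivity

lemma laplaceTransform_pos (hμ : ∀ k, 0 ≤ μ k) (hμ0 : 0 < μ 0) (hθ : θ ∈ LaplaceDomain μ) :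
    0 < laplaceTransform μ θ :=
  hμ0.trans_le (le_laplaceTransform hμ hθ)

lemma sub_smul_one_mem_interior_laplaceDomain (hμ : ∀ k, 0 ≤ μ k)
    (hθ : θ ∈ interior (LaplaceDomain μ)) {t : ℝ} (ht : 0 ≤ t) :
    θ - t • 1 ∈ interior (LaplaceDomain μ) :=
  (isLowerSet_laplaceDomain hμ).interior (fun i => by simpa using ht) hθ

lemma summable_pairing_one_mul_of_mem_interior (hμ : ∀ k, 0 ≤ μ k)
    (hθ : θ ∈ interior (LaplaceDomain μ)) :
    Summable fun k => μ k * pairing k 1 * Real.exp (pairing k θ) := by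
  obtain ⟨r, hr, hball⟩ := Metric.mem_nhds_iff.1 (mem_interior_iff_mem_nhds.1 hθ)
  have hδ : 0 < r / 2 := by positivity
  have hshift := mem_laplaceDomain_iff.1 (hball (add_smul_one_mem_ball θ hδ.le (by linarith)))
  refine (hshift.mul_left (r / 2)⁻¹).of_nonneg_of_le
    (fun k => by have := hμ k; have := pairing_nonneg k (zero_le_one (α := Fin n → ℝ)); positivity)
    fun k => ?_
  -- `x ≤ δ⁻¹ e^{δx}`: the shift by `δ • 1` pays for the factor `|k| = ⟨1, k⟩`
  have hk : pairing k 1 ≤ (r / 2)⁻¹ * Real.exp (r / 2 * pairing k 1) := by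
    rw [le_inv_mul_iff₀ hδ]
    linarith [Real.add_one_le_exp (r / 2 * pairing k 1)]
  calc μ k * pairing k 1 * Real.exp (pairing k θ)
      ≤ μ k * ((r / 2)⁻¹ * Real.exp (r / 2 * pairing k 1)) * Real.exp (pairing k θ) := by
        gcongr
        exact hμ k
    _ = (r / 2)⁻¹ * (μ k * Real.exp (pairing k (θ + (r / 2) • 1))) := by
        rw [map_add, map_smul, smul_eq_mul, Real.exp_add]
        ring

lemma norm_smul_pairing_le (hμ : ∀ k, 0 ≤ μ k) (k : Fin n → ℕ) {x y : Fin n → ℝ}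
    (hxy : x ≤ y) :
    ‖(μ k * Real.exp (pairing k x)) • pairing k‖ ≤ μ k * pairing k 1 * Real.exp (pairing k y) := by
  have := hμ k
  have := pairing_nonneg k (zero_le_one (α := Fin n → ℝ))
  rw [norm_smul, Real.norm_of_nonneg (by positivity), mul_right_comm]
  gcongr
  · exact norm_pairing_le k
  · exact pairing_mono k hxy

lemma summable_smul_pairing (hμ : ∀ k, 0 ≤ μ k) (hθ : θ ∈ interior (LaplaceDomain μ)) :
    Summable fun k => (μ k * Real.exp (pairing k θ)) • pairing k :=
  (summable_pairing_one_mul_of_mem_interior hμ hθ).of_norm_bounded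
    fun k => norm_smul_pairing_le hμ k le_rfl

lemma hasFDerivAt_mul_exp_pairing (c : ℝ) (k : Fin n → ℕ) (x : Fin n → ℝ) :
    HasFDerivAt (fun y => c * Real.exp (pairing k y))
      ((c * Real.exp (pairing k x)) • pairing k) x := by
  simpa [smul_smul] using (pairing k).hasFDerivAt.exp.const_mul c

lemma hasFDerivAt_laplaceTransform (hμ : ∀ k, 0 ≤ μ k) (hθ : θ ∈ interior (LaplaceDomain μ)) :
    HasFDerivAt (laplaceTransform μ) (∑' k, (μ k * Real.exp (pairing k θ)) • pairing k) θ := by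
  obtain ⟨r, hr, hball⟩ := isOpen_iff.1 isOpen_interior θ hθ
  have hδ : 0 < r / 2 := by positivity
  have hshift : θ + (r / 2) • 1 ∈ interior (LaplaceDomain μ) :=
    hball (add_smul_one_mem_ball θ hδ.le (by linarith))
  exact hasFDerivAt_tsum_of_isPreconnected
    (summable_pairing_one_mul_of_mem_interior hμ hshift) isOpen_ball
    (convex_ball θ (r / 2)).isPreconnected (fun k x _ => hasFDerivAt_mul_exp_pairing _ k x)
    (fun k x hx => norm_smul_pairing_le hμ k (le_add_smul_one_of_mem_ball hx))
    (mem_ball_self hδ) (mem_laplaceDomain_iff.1 (interior_subset hθ)) (mem_ball_self hδ)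

/-- The `i`-th partial derivative of `laplaceTransform μ`. -/
def laplaceMoment (μ : (Fin n → ℕ) → ℝ) (i : Fin n) (θ : Fin n → ℝ) : ℝ :=
  ∑' k, μ k * k i * Real.exp (pairing k θ)

lemma laplaceMoment_nonneg (hμ : ∀ k, 0 ≤ μ k) (i : Fin n) (θ : Fin n → ℝ) :
    0 ≤ laplaceMoment μ i θ :=
  tsum_nonneg fun k => by have := hμ k; positivity

lemma summable_laplaceMoment (hμ : ∀ k, 0 ≤ μ k) (hθ : θ ∈ interior (LaplaceDomain μ))
    (i : Fin n) : Summable fun k => μ k * k i * Real.exp (pairing k θ) :=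
  (summable_pairing_one_mul_of_mem_interior hμ hθ).of_nonneg_of_le
    (fun k => by have := hμ k; positivity)
    fun k => by have := hμ k; gcongr; exact cast_le_pairing_one k i

lemma laplaceMoment_pos (hμ : ∀ k, 0 ≤ μ k) {i : Fin n} (hμi : 0 < μ (Pi.single i 1))
    (hθ : θ ∈ interior (LaplaceDomain μ)) : 0 < laplaceMoment μ i θ :=
  (summable_laplaceMoment hμ hθ i).tsum_pos (fun k => by have := hμ k; positivity)
    (Pi.single i 1) (by simpa using mul_pos hμi (Real.exp_pos _))

lemma laplaceMoment_sub_smul_one_le (hμ : ∀ k, 0 ≤ μ k) (hθ : θ ∈ interior (LaplaceDomain μ))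
    {t : ℝ} (ht : 0 ≤ t) (i : Fin n) :
    laplaceMoment μ i (θ - t • 1) ≤ Real.exp (-t) * laplaceMoment μ i θ := by
  rw [laplaceMoment, laplaceMoment, ← tsum_mul_left]
  have hθt := sub_smul_one_mem_interior_laplaceDomain hμ hθ ht
  refine (summable_laplaceMoment hμ hθt i).tsum_le_tsum (fun k => ?_)
    ((summable_laplaceMoment hμ hθ i).mul_left _)
  rcases eq_or_ne (k i) 0 with hki | hki
  · simp [hki]
  have hk : 1 ≤ pairing k 1 := (Nat.one_le_cast.2 (Nat.one_le_iff_ne_zero.2 hki)).trans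
    (cast_le_pairing_one k i)
  have := hμ k
  rw [map_sub, map_smul, smul_eq_mul, sub_eq_add_neg, Real.exp_add]
  calc μ k * k i * (Real.exp (pairing k θ) * Real.exp (-(t * pairing k 1)))
      ≤ μ k * k i * (Real.exp (pairing k θ) * Real.exp (-t)) := by
        gcongr
        nlinarith
    _ = Real.exp (-t) * (μ k * k i * Real.exp (pairing k θ)) := by ring

lemma hasFDerivAt_cumulant (hμ : ∀ k, 0 ≤ μ k) (hμ0 : 0 < μ 0)
    (hθ : θ ∈ interior (LaplaceDomain μ)) :
    HasFDerivAt (cumulant μ)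
      ((laplaceTransform μ θ)⁻¹ • ∑' k, (μ k * Real.exp (pairing k θ)) • pairing k) θ := by
  rw [cumulant_eq_log_laplaceTransform]
  exact (hasFDerivAt_laplaceTransform hμ hθ).log
    (laplaceTransform_pos hμ hμ0 (interior_subset hθ)).ne'

lemma fderiv_cumulant_single (hμ : ∀ k, 0 ≤ μ k) (hμ0 : 0 < μ 0)
    (hθ : θ ∈ interior (LaplaceDomain μ)) (i : Fin n) :
    fderiv ℝ (cumulant μ) θ (Pi.single i 1) =
      (laplaceTransform μ θ)⁻¹ * laplaceMoment μ i θ := by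
  rw [(hasFDerivAt_cumulant hμ hμ0 hθ).fderiv, smul_apply, smul_eq_mul,
    ← ContinuousLinearMap.apply_apply (Pi.single i 1),
    ContinuousLinearMap.map_tsum _ (summable_smul_pairing hμ hθ)]
  simp [laplaceMoment, pairing_single, mul_right_comm]

lemma fderiv_cumulant_single_pos (hμ : ∀ k, 0 ≤ μ k) (hμ0 : 0 < μ 0) {i : Fin n}
    (hμi : 0 < μ (Pi.single i 1)) (hθ : θ ∈ interior (LaplaceDomain μ)) :
    0 < fderiv ℝ (cumulant μ) θ (Pi.single i 1) := by
  rw [fderiv_cumulant_single hμ hμ0 hθ]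
  exact mul_pos (inv_pos.2 (laplaceTransform_pos hμ hμ0 (interior_subset hθ)))
    (laplaceMoment_pos hμ hμi hθ)

lemma fderiv_cumulant_single_nonneg (hμ : ∀ k, 0 ≤ μ k) (hμ0 : 0 < μ 0)
    (hθ : θ ∈ interior (LaplaceDomain μ)) (i : Fin n) :
    0 ≤ fderiv ℝ (cumulant μ) θ (Pi.single i 1) := by
  rw [fderiv_cumulant_single hμ hμ0 hθ]
  exact mul_nonneg (inv_nonneg.2 (laplaceTransform_pos hμ hμ0 (interior_subset hθ)).le)
    (laplaceMoment_nonneg hμ i θ)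

lemma fderiv_cumulant_sub_smul_one_single_le (hμ : ∀ k, 0 ≤ μ k) (hμ0 : 0 < μ 0)
    (hθ : θ ∈ interior (LaplaceDomain μ)) {t : ℝ} (ht : 0 ≤ t) (i : Fin n) :
    fderiv ℝ (cumulant μ) (θ - t • 1) (Pi.single i 1) ≤
      (μ 0)⁻¹ * (Real.exp (-t) * laplaceMoment μ i θ) := by
  have hθt := sub_smul_one_mem_interior_laplaceDomain hμ hθ ht
  rw [fderiv_cumulant_single hμ hμ0 hθt]
  exact mul_le_mul (inv_anti₀ hμ0 (le_laplaceTransform hμ (interior_subset hθt)))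
    (laplaceMoment_sub_smul_one_le hμ hθ ht i) (laplaceMoment_nonneg hμ i _)
    (inv_nonneg.2 hμ0.le)

lemma tendsto_fderiv_cumulant_sub_smul_one (hμ : ∀ k, 0 ≤ μ k) (hμ0 : 0 < μ 0)
    (hθ : θ ∈ interior (LaplaceDomain μ)) :
    Tendsto (fun t : ℝ => fun i => fderiv ℝ (cumulant μ) (θ - t • 1) (Pi.single i 1))
      atTop (𝓝 0) := by
  refine tendsto_pi_nhds.2 fun i => ?_
  have hbound : Tendsto (fun t => (μ 0)⁻¹ * (Real.exp (-t) * laplaceMoment μ i θ))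
      atTop (𝓝 0) := by
    simpa using (Real.tendsto_exp_neg_atTop_nhds_zero.mul_const _).const_mul (μ 0)⁻¹
  refine tendsto_of_tendsto_of_tendsto_of_le_of_le' tendsto_const_nhds hbound ?_ ?_
  · filter_upwards [eventually_ge_atTop 0] with t ht
    exact fderiv_cumulant_single_nonneg hμ hμ0
      (sub_smul_one_mem_interior_laplaceDomain hμ hθ ht) i
  · filter_upwards [eventually_ge_atTop 0] with t ht
    exact fderiv_cumulant_sub_smul_one_single_le hμ hμ0 hθ ht i

end

theorem domain_of_means_of_NEF_on_Nn_general {n : ℕ}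
    (μ : (Fin n → ℕ) → ℝ)
    (hμnonneg : ∀ k, 0 ≤ μ k)
    (hμ0 : 0 < μ 0)
    (hμe : ∀ i : Fin n, 0 < μ (Pi.single i 1))
    (hΘ : (interior (LaplaceDomain μ)).Nonempty) :
    (∀ θ ∈ interior (LaplaceDomain μ),
      DifferentiableAt ℝ (cumulant μ) θ ∧
      ∀ i : Fin n, 0 < fderiv ℝ (cumulant μ) θ (Pi.single i 1)) ∧
    (0 : Fin n → ℝ) ∈
      closure ((fun θ => fun i : Fin n => fderiv ℝ (cumulant μ) θ (Pi.single i 1)) ''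
        interior (LaplaceDomain μ)) := by
  obtain ⟨θ₀, hθ₀⟩ := hΘ
  refine ⟨fun θ hθ => ⟨(hasFDerivAt_cumulant hμnonneg hμ0 hθ).differentiableAt,
    fun i => fderiv_cumulant_single_pos hμnonneg hμ0 (hμe i) hθ⟩, ?_⟩
  refine mem_closure_of_tendsto (tendsto_fderiv_cumulant_sub_smul_one hμnonneg hμ0 hθ₀) ?_
  filter_upwards [eventually_ge_atTop 0] with t ht
  exact Set.mem_image_of_mem _ (sub_smul_one_mem_interior_laplaceDomain hμnonneg hθ₀ ht)

/-- **Proposition 6.3, part 1.** For a measure `μ = Σ_{k∈ℕⁿ} μ_k δ_k` with `μ₀ > 0` and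
`μ_{e_i} > 0`, whose Laplace transform has a nonempty open domain of finiteness: the cumulant
function is differentiable on the interior of the domain, every coordinate of its gradient is
positive there (so the domain of the means is contained in `(0,∞)ⁿ`), and `0` is in the closure
of the domain of the means. -/
theorem domain_of_means_of_NEF_on_Nn {n : ℕ} (hn : 1 ≤ n)
    (μ : (Fin n → ℕ) → ℝ)
    (hμnonneg : ∀ k, 0 ≤ μ k)
    (hμ0 : 0 < μ 0)
    (hμe : ∀ i : Fin n, 0 < μ (Pi.single i 1))
    (hΘ : (interior (LaplaceDomain μ)).Nonempty) :
    (∀ θ ∈ interior (LaplaceDomain μ),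
      DifferentiableAt ℝ (cumulant μ) θ ∧
      ∀ i : Fin n, 0 < fderiv ℝ (cumulant μ) θ (Pi.single i 1)) ∧
    (0 : Fin n → ℝ) ∈
      closure ((fun θ => fun i : Fin n => fderiv ℝ (cumulant μ) θ (Pi.single i 1)) ''
        interior (LaplaceDomain μ)) :=
  domain_of_means_of_NEF_on_Nn_general μ hμnonneg hμ0 hμe hΘ
end
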